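/- arXiv:0909.3863 — 7 statements merged into one kernel-verified Lean document; each statement's English description precedes it below -/
import Mathlib

section
/- The measure ρ has exponential tails and finite moments of all orders: there exists δ > 0 with ∫_ℝ exp(δ|u|) ρ(du) < ∞, in particular ∫_ℝ |u|^p ρ(du) < ∞ for every p ≥ 0; moreover σ² := ∫_ℝ u² ρ(du) satisfies 0 < σ² < ∞. -/
open MeasureTheory
open scoped ENNReal

/-- With `w`, `W`, `Z` as before and `ρ(du) = Z⁻¹ exp (-W u) du`,
the measure `ρ` has exponential tails and finite moments of all orders:
there is `δ > 0` with `∫ exp (δ|u|) ρ(du) < ∞`, in particular `∫ |u|^p ρ(du) < ∞`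
for every `p ≥ 0`; moreover `σ² = ∫ u² ρ(du)` satisfies `0 < σ² < ∞`. -/
theorem stmt_4 (w : ℝ → ℝ) (hw_pos : ∀ x, 0 < w x) (hw_mono : Monotone w)
    (hw_nconst : ∃ a b : ℝ, w a ≠ w b)
    (W : ℝ → ℝ) (hW : ∀ u, W u = ∫ v in (0:ℝ)..u, (w v - w (-v)))
    (Z : ℝ) (hZ : Z = ∫ v, Real.exp (-(W v)))
    (ρ : Measure ℝ)
    (hρ : ρ = volume.withDensity fun u => ENNReal.ofReal (Z⁻¹ * Real.exp (-(W u)))) :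
    (∃ δ : ℝ, 0 < δ ∧ Integrable (fun u => Real.exp (δ * |u|)) ρ) ∧
      (∀ p : ℝ, 0 ≤ p → Integrable (fun u => |u| ^ p) ρ) ∧
      Integrable (fun u => u ^ 2) ρ ∧ 0 < ∫ u, u ^ 2 ∂ρ := by
  classical
  set g : ℝ → ℝ := fun v => w v - w (-v) with hg_def
  have hg_mono : Monotone g := by
    intro x y hxy
    have h1 := hw_mono hxy
    have h2 := hw_mono (neg_le_neg hxy)
    simp only [g]
    linarith
  have hg_int : ∀ a b : ℝ, IntervalIntegrable g volume a b :=
    fun a b => hg_mono.intervalIntegrable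
  have hWg : ∀ u, W u = ∫ v in (0:ℝ)..u, g v := hW
  have hWcont : Continuous W := by
    have h : Continuous fun u => ∫ v in (0:ℝ)..u, g v :=
      intervalIntegral.continuous_primitive hg_int 0
    exact h.congr fun u => (hWg u).symm
  obtain ⟨a, b, hab⟩ := hw_nconst
  set c : ℝ := max 1 (max (max a b) (-(min a b))) with hc_def
  have hc1 : (1:ℝ) ≤ c := le_max_left _ _
  have hc0 : (0:ℝ) < c := lt_of_lt_of_le one_pos hc1
  have hcmax : max a b ≤ c := le_trans (le_max_left _ _) (le_max_right _ _)
  have hcmin : -c ≤ min a b := by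
    have h := le_trans (le_max_right (max a b) (-(min a b))) (le_max_right 1 _)
    linarith
  set ε : ℝ := g c with hε_def
  have hε_pos : 0 < ε := by
    have h1 : w (min a b) < w (max a b) := by
      rcases le_total a b with h | h
      · simpa [min_eq_left h, max_eq_right h] using
          lt_of_le_of_ne (hw_mono h) hab
      · simpa [min_eq_right h, max_eq_left h] using
          lt_of_le_of_ne (hw_mono h) (Ne.symm hab)
    have h2 : w (max a b) ≤ w c := hw_mono hcmax
    have h3 : w (-c) ≤ w (min a b) := hw_mono hcmin
    simp only [hε_def, g]
    linarith
  have hg_nonneg : ∀ v : ℝ, 0 ≤ v → 0 ≤ g v := by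
    intro v hv
    have := hw_mono (by linarith : -v ≤ v)
    simp only [g]
    linarith
  have hg_odd : ∀ x : ℝ, g (-x) = -g x := by
    intro x
    simp only [g, neg_neg]
    ring
  clear_value g c ε
  have hW_nonneg : ∀ u : ℝ, 0 ≤ u → 0 ≤ W u := by
    intro u hu
    rw [hWg]
    exact intervalIntegral.integral_nonneg hu fun x hx => hg_nonneg x hx.1
  have hW_lb0 : ∀ u : ℝ, 0 ≤ u → ε * u - ε * c ≤ W u := by
    intro u hu
    rcases le_total u c with h | h
    · have := hW_nonneg u hu
      nlinarith
    · have hsplit : W u = (∫ v in (0:ℝ)..c, g v) + ∫ v in c..u, g v := by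
        rw [hWg]
        exact (intervalIntegral.integral_add_adjacent_intervals (hg_int 0 c) (hg_int c u)).symm
      have h1 : 0 ≤ ∫ v in (0:ℝ)..c, g v :=
        intervalIntegral.integral_nonneg hc0.le fun x hx => hg_nonneg x hx.1
      have h2 : ε * (u - c) ≤ ∫ v in c..u, g v := by
        have h3 := intervalIntegral.integral_mono_on (μ := volume) h
          (intervalIntegrable_const (c := ε)) (hg_int c u) (fun x hx => le_trans (le_of_eq hε_def) (hg_mono hx.1))
        rw [intervalIntegral.integral_const] at h3
        calc ε * (u - c) = (u - c) • ε := by rw [smul_eq_mul]; ring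
          _ ≤ _ := h3
      linarith
  have hW_even : ∀ u : ℝ, W (-u) = W u := by
    intro u
    have h1 := intervalIntegral.integral_comp_neg (f := g) (a := 0) (b := u)
    rw [neg_zero] at h1
    have h2 : (∫ x in (0:ℝ)..u, g (-x)) = -∫ x in (0:ℝ)..u, g x := by
      simp_rw [hg_odd]
      exact intervalIntegral.integral_neg
    have h3 : (∫ x in (-u)..(0:ℝ), g x) = -∫ x in (0:ℝ)..(-u), g x :=
      intervalIntegral.integral_symm 0 (-u)
    rw [h2, h3] at h1
    rw [hWg u, hWg (-u)]
    linarith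
  have hW_lb : ∀ u : ℝ, ε * |u| - ε * c ≤ W u := by
    intro u
    rcases le_total 0 u with h | h
    · rw [abs_of_nonneg h]; exact hW_lb0 u h
    · rw [abs_of_nonpos h, ← hW_even u]
      exact hW_lb0 (-u) (by linarith)
  have hexp_bound : ∀ u : ℝ, Real.exp (-(W u)) ≤ Real.exp (ε * c) * Real.exp (-(ε * |u|)) := by
    intro u
    rw [← Real.exp_add]
    exact Real.exp_le_exp.mpr (by linarith [hW_lb u])
  -- base integrability of exp(-(δ|u|))
  have hbase : ∀ δ : ℝ, 0 < δ → Integrable (fun u : ℝ => Real.exp (-(δ * |u|))) volume := by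
    intro δ hδ
    set F : ℝ → ℝ := fun u => Real.exp (-(δ * |u|)) with hF
    have h1 : IntegrableOn F (Set.Ioi (0:ℝ)) := by
      have h := exp_neg_integrableOn_Ioi 0 hδ
      apply h.congr_fun ?_ measurableSet_Ioi
      intro x hx
      simp only [F, abs_of_pos (Set.mem_Ioi.mp hx), neg_mul]
    have h2 : IntegrableOn F (Set.Iio (0:ℝ)) := by
      have hind : Integrable ((Set.Ioi (0:ℝ)).indicator F) volume :=
        h1.integrable_indicator measurableSet_Ioi
      have hneg : Integrable (fun x => (Set.Ioi (0:ℝ)).indicator F (-x)) volume :=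
        hind.comp_neg
      have heq : (fun x => (Set.Ioi (0:ℝ)).indicator F (-x)) = (Set.Iio (0:ℝ)).indicator F := by
        funext x
        by_cases hx : x < 0
        · rw [Set.indicator_of_mem (Set.mem_Ioi.mpr (by linarith)),
            Set.indicator_of_mem (Set.mem_Iio.mpr hx)]
          simp [F, abs_neg]
        · rw [Set.indicator_of_notMem (by simp [Set.mem_Ioi]; linarith [not_lt.mp hx]),
            Set.indicator_of_notMem (by simpa using not_lt.mp hx)]
      rw [heq] at hneg
      exact (integrable_indicator_iff measurableSet_Iio).mp hneg
    have h3 : IntegrableOn F (Set.Ici (0:ℝ)) := (integrableOn_Ici_iff_integrableOn_Ioi).mpr h1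
    have h4 := h2.union h3
    rwa [Set.Iio_union_Ici, integrableOn_univ] at h4
  -- key integrability criterion w.r.t. volume
  have hkey : ∀ (C : ℝ) (f : ℝ → ℝ), Continuous f →
      (∀ u, |f u| ≤ C * Real.exp (ε / 2 * |u|)) →
      Integrable (fun u => f u * Real.exp (-(W u))) volume := by
    intro C f hf hfb
    have hC : 0 ≤ C := by
      have h := hfb 0
      simp only [abs_zero, mul_zero, Real.exp_zero, mul_one] at h
      exact le_trans (abs_nonneg _) h
    apply Integrable.mono (((hbase (ε/2) (by linarith)).const_mul (C * Real.exp (ε * c))))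
    · exact (hf.mul (Real.continuous_exp.comp hWcont.neg)).aestronglyMeasurable
    · filter_upwards with u
      have h1 : |f u * Real.exp (-(W u))| ≤
          (C * Real.exp (ε / 2 * |u|)) * (Real.exp (ε * c) * Real.exp (-(ε * |u|))) := by
        rw [abs_mul, abs_of_pos (Real.exp_pos _)]
        exact mul_le_mul (hfb u) (hexp_bound u) (Real.exp_pos _).le
          (by positivity)
      have h2 : (C * Real.exp (ε / 2 * |u|)) * (Real.exp (ε * c) * Real.exp (-(ε * |u|)))
          = C * Real.exp (ε * c) * Real.exp (-(ε / 2 * |u|)) := by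
        have e1 : Real.exp (ε / 2 * |u|) * (Real.exp (ε * c) * Real.exp (-(ε * |u|)))
            = Real.exp (ε * c) * Real.exp (-(ε / 2 * |u|)) := by
          rw [← Real.exp_add, ← Real.exp_add, ← Real.exp_add]
          congr 1
          ring
        calc (C * Real.exp (ε / 2 * |u|)) * (Real.exp (ε * c) * Real.exp (-(ε * |u|)))
            = C * (Real.exp (ε / 2 * |u|) * (Real.exp (ε * c) * Real.exp (-(ε * |u|)))) := by ring
          _ = C * (Real.exp (ε * c) * Real.exp (-(ε / 2 * |u|))) := by rw [e1]
          _ = C * Real.exp (ε * c) * Real.exp (-(ε / 2 * |u|)) := by ring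
      rw [Real.norm_eq_abs, Real.norm_eq_abs]
      rw [abs_of_nonneg (by positivity : (0:ℝ) ≤ C * Real.exp (ε * c) * Real.exp (-(ε / 2 * |u|)))]
      linarith [h1, h2.le]
  -- Z is positive
  have hZint : Integrable (fun v => Real.exp (-(W v))) volume := by
    have h := hkey 1 (fun _ => 1) continuous_const (fun u => by
      simp only [abs_one, one_mul]
      nlinarith [Real.add_one_le_exp (ε / 2 * |u|), abs_nonneg u, hε_pos])
    simpa using h
  have hZpos : 0 < Z := by
    rw [hZ]
    rw [integral_pos_iff_support_of_nonneg (fun v => (Real.exp_pos _).le) hZint]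
    have hsupp : Function.support (fun v => Real.exp (-(W v))) = Set.univ :=
      Set.eq_univ_of_forall fun v => (Real.exp_pos _).ne'
    rw [hsupp]
    simp
  -- density measurability
  have hdcont : Continuous fun u => Z⁻¹ * Real.exp (-(W u)) :=
    continuous_const.mul (Real.continuous_exp.comp hWcont.neg)
  have hdmeas : Measurable fun u => ENNReal.ofReal (Z⁻¹ * Real.exp (-(W u))) :=
    ENNReal.measurable_ofReal.comp hdcont.measurable
  have hdlt : ∀ᵐ x ∂(volume : Measure ℝ), ENNReal.ofReal (Z⁻¹ * Real.exp (-(W x))) < ⊤ :=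
    Filter.Eventually.of_forall fun x => ENNReal.ofReal_lt_top
  have hρ_int : ∀ (C : ℝ) (f : ℝ → ℝ), Continuous f →
      (∀ u, |f u| ≤ C * Real.exp (ε / 2 * |u|)) → Integrable f ρ := by
    intro C f hf hfb
    rw [hρ, integrable_withDensity_iff hdmeas hdlt]
    have heq : (fun x => f x * (ENNReal.ofReal (Z⁻¹ * Real.exp (-(W x)))).toReal)
        = fun x => Z⁻¹ * (f x * Real.exp (-(W x))) := by
      funext x
      rw [ENNReal.toReal_ofReal
        (mul_nonneg (inv_nonneg.mpr hZpos.le) (Real.exp_pos _).le)]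
      ring
    rw [heq]
    exact (hkey C f hf hfb).const_mul _
  -- exponential moment
  have hgoal1 : Integrable (fun u => Real.exp (ε / 2 * |u|)) ρ := by
    apply hρ_int 1 _ (Real.continuous_exp.comp (continuous_const.mul continuous_abs))
    intro u
    show |Real.exp (ε / 2 * |u|)| ≤ 1 * Real.exp (ε / 2 * |u|)
    rw [abs_of_pos (Real.exp_pos _), one_mul]
  -- polynomial moments
  have hgoal2 : ∀ p : ℝ, 0 ≤ p → Integrable (fun u => |u| ^ p) ρ := by
    intro p hp
    set n : ℕ := ⌈p⌉₊ with hn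
    apply hρ_int (1 + (n.factorial : ℝ) * (2 / ε) ^ n) _
      (continuous_abs.rpow_const fun x => Or.inr hp)
    intro u
    rw [abs_of_nonneg (Real.rpow_nonneg (abs_nonneg u) p)]
    have hexp1 : (1:ℝ) ≤ Real.exp (ε / 2 * |u|) := by
      nlinarith [Real.add_one_le_exp (ε / 2 * |u|), abs_nonneg u, hε_pos]
    have hCn : (0:ℝ) ≤ (n.factorial : ℝ) * (2 / ε) ^ n := by positivity
    rcases le_total (|u|) 1 with h | h
    · have h1 : |u| ^ p ≤ 1 := Real.rpow_le_one (abs_nonneg u) h hp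
      nlinarith [Real.exp_pos (ε / 2 * |u|)]
    · have h1 : |u| ^ p ≤ |u| ^ (n:ℝ) :=
        Real.rpow_le_rpow_of_exponent_le h (Nat.le_ceil p)
      have h2 : |u| ^ (n:ℝ) = |u| ^ n := Real.rpow_natCast _ n
      have h3 : (ε / 2 * |u|) ^ n / (n.factorial : ℝ) ≤ Real.exp (ε / 2 * |u|) := by
        refine le_trans ?_ (Real.sum_le_exp_of_nonneg (x := ε / 2 * |u|) (by positivity) (n + 1))
        exact Finset.single_le_sum (f := fun i => (ε / 2 * |u|) ^ i / (i.factorial : ℝ))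
          (fun i _ => by positivity) (Finset.self_mem_range_succ n)
      have h4 : |u| ^ n ≤ (n.factorial : ℝ) * (2 / ε) ^ n * Real.exp (ε / 2 * |u|) := by
        have hmul : (ε / 2 * |u|) ^ n = (ε / 2) ^ n * |u| ^ n := mul_pow _ _ _
        have hfact : (0:ℝ) < (n.factorial : ℝ) := by positivity
        rw [hmul, div_le_iff₀ hfact] at h3
        have hinv : (2 / ε) ^ n * (ε / 2) ^ n = 1 := by
          rw [← mul_pow]
          have hne : ε ≠ 0 := ne_of_gt hε_pos
          field_simp
          exact one_pow n
        calc |u| ^ n = (2 / ε) ^ n * ((ε / 2) ^ n * |u| ^ n) := by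
              rw [← mul_assoc, hinv, one_mul]
          _ ≤ (2 / ε) ^ n * (Real.exp (ε / 2 * |u|) * (n.factorial : ℝ)) := by
              refine mul_le_mul_of_nonneg_left h3 ?_
              positivity
          _ = (n.factorial : ℝ) * (2 / ε) ^ n * Real.exp (ε / 2 * |u|) := by ring
      nlinarith [Real.exp_pos (ε / 2 * |u|), h1, h2, h4]
  have hgoal3 : Integrable (fun u : ℝ => u ^ 2) ρ := by
    have h := hgoal2 2 (by norm_num)
    refine h.congr (Filter.Eventually.of_forall fun u => ?_)
    show |u| ^ (2:ℝ) = u ^ 2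
    rw [Real.rpow_two, sq_abs]
  have hW_mono' : ∀ x y : ℝ, 0 ≤ x → x ≤ y → W x ≤ W y := by
    intro x y hx hxy
    have h := intervalIntegral.integral_add_adjacent_intervals (hg_int 0 x) (hg_int x y)
    have h2 : 0 ≤ ∫ v in x..y, g v :=
      intervalIntegral.integral_nonneg hxy fun t ht => hg_nonneg t (le_trans hx ht.1)
    rw [hWg x, hWg y, ← h]
    linarith
  have hρI : 0 < ρ (Set.Ioc (1:ℝ) 2) := by
    rw [hρ, withDensity_apply _ measurableSet_Ioc]
    have hlb : ENNReal.ofReal (Z⁻¹ * Real.exp (-(W 2))) * volume (Set.Ioc (1:ℝ) 2)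
        ≤ ∫⁻ x in Set.Ioc (1:ℝ) 2, ENNReal.ofReal (Z⁻¹ * Real.exp (-(W x))) := by
      rw [← setLIntegral_const]
      refine setLIntegral_mono hdmeas fun x hx => ?_
      apply ENNReal.ofReal_le_ofReal
      refine mul_le_mul_of_nonneg_left ?_ (inv_nonneg.mpr hZpos.le)
      exact Real.exp_le_exp.mpr (neg_le_neg (hW_mono' x 2 (by linarith [hx.1]) hx.2))
    refine lt_of_lt_of_le ?_ hlb
    have hvol : volume (Set.Ioc (1:ℝ) 2) = 1 := by
      rw [Real.volume_Ioc]
      norm_num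
    rw [hvol, mul_one]
    exact ENNReal.ofReal_pos.mpr (mul_pos (inv_pos.mpr hZpos) (Real.exp_pos _))
  refine ⟨⟨ε / 2, by linarith, hgoal1⟩, hgoal2, hgoal3, ?_⟩
  rw [integral_pos_iff_support_of_nonneg (fun u => sq_nonneg u) hgoal3]
  have hsupp : Function.support (fun u : ℝ => u ^ 2) = {(0:ℝ)}ᶜ := by
    ext u
    simp [Function.mem_support, pow_eq_zero_iff]
  rw [hsupp]
  refine lt_of_lt_of_le hρI (measure_mono fun x hx => ?_)
  simp only [Set.mem_compl_iff, Set.mem_singleton_iff]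
  intro h
  rw [h] at hx
  exact absurd hx.1 (by norm_num)
end

section
/- The measure μ is stationary for the generator G: for every function f : {−1,+1} × ℝ → ℝ such that u ↦ f(ε,u) is continuously differentiable with compact support for ε = ±1, one has ∑_{ε∈{−1,+1}} ∫_ℝ (Gf)(ε,u) · (2Z)⁻¹ e^{−W(u)} du = 0, where (Gf)(ε,u) := ε ∂_u f(ε,u) + w(εu)(f(−ε,u) − f(ε,u)). -/
open MeasureTheory
open scoped ENNReal


/-- Integrability of measurable function bounded on the support of a compactly supported
continuous function, times that function. -/
lemma aux_integrable_mul (k g : ℝ → ℝ) (hk : AEStronglyMeasurable k volume)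
    (hg : Continuous g) (hgc : HasCompactSupport g) (C : ℝ)
    (hC : ∀ x ∈ tsupport g, |k x| ≤ C) :
    Integrable (fun u => k u * g u) := by
  have hgint : Integrable g := hg.integrable_of_hasCompactSupport hgc
  refine Integrable.mono' ((hgint.abs).const_mul (max C 0)) (hk.mul hg.aestronglyMeasurable) ?_
  filter_upwards with x
  rw [Real.norm_eq_abs, abs_mul]
  by_cases hx : x ∈ tsupport g
  · exact mul_le_mul_of_nonneg_right (le_trans (hC x hx) (le_max_left _ _)) (abs_nonneg _)
  · have : g x = 0 := image_eq_zero_of_notMem_tsupport hx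
    rw [this, abs_zero, mul_zero]
    positivity

/-- Key computation: the integral of the exact derivative vanishes. -/
lemma aux_key (h : ℝ → ℝ) (hmono : Monotone h)
    (g : ℝ → ℝ) (hg : ContDiff ℝ 1 g) (hgc : HasCompactSupport g)
    (W : ℝ → ℝ) (hW : ∀ u, W u = ∫ v in (0:ℝ)..u, h v) :
    ∫ u, (deriv g u - g u * h u) * Real.exp (-(W u)) = 0 := by
  have hWfun : W = fun u => ∫ v in (0:ℝ)..u, h v := funext hW
  have hInt : ∀ a b : ℝ, IntervalIntegrable h volume a b := fun a b => hmono.intervalIntegrable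
  have hWcont : Continuous W := by
    rw [hWfun]; exact intervalIntegral.continuous_primitive hInt 0
  have hecont : Continuous fun u => Real.exp (-(W u)) := (hWcont.neg).rexp
  have hgcont : Continuous g := hg.continuous
  have hg' : Continuous (deriv g) := hg.continuous_deriv le_rfl
  have hgdiff : Differentiable ℝ g := hg.differentiable one_ne_zero
  -- compact support radius
  obtain ⟨R, hR⟩ := hgc.isCompact.isBounded.subset_closedBall 0
  have hR' : tsupport g ⊆ Set.Icc (-(R+1)) (R+1) := by
    intro x hx
    have := hR hx
    rw [Metric.mem_closedBall, Real.dist_eq, sub_zero] at this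
    have := abs_le.1 this
    constructor <;> linarith [this.1, this.2]
  set R' : ℝ := R + 1 with hR'def
  -- the integrand
  set ψ : ℝ → ℝ := fun u => (deriv g u - g u * h u) * Real.exp (-(W u)) with hψ
  have hsupp : Function.support ψ ⊆ Set.Icc (-R') R' := by
    intro x hx
    by_contra hxmem
    have hgx : g x = 0 := image_eq_zero_of_notMem_tsupport (fun hmem => hxmem (hR' hmem))
    have hgx' : deriv g x = 0 := by
      by_contra hne
      exact hxmem (hR' (support_deriv_subset (by simpa using hne)))
    apply hx
    simp [hψ, hgx, hgx']
  -- measurability and integrability of ψ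
  have hkmeas : AEStronglyMeasurable h volume := hmono.measurable.aestronglyMeasurable
  have hint1 : Integrable (fun u => deriv g u * Real.exp (-(W u))) :=
    (hg'.mul hecont).integrable_of_hasCompactSupport (hgc.deriv.mul_right)
  have hint2 : Integrable (fun u => h u * (g u * Real.exp (-(W u)))) := by
    refine aux_integrable_mul h _ hkmeas (hgcont.mul hecont) (hgc.mul_right)
      (max |h (-R')| |h R'|) ?_
    intro x hx
    have hxm : x ∈ Set.Icc (-R') R' := by
      refine hR' (closure_mono (Function.support_mul_subset_left _ _) hx)
    exact abs_le_max_abs_abs (hmono hxm.1) (hmono hxm.2)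
  have hintψ : Integrable ψ := by
    have : ψ = fun u => deriv g u * Real.exp (-(W u)) - h u * (g u * Real.exp (-(W u))) := by
      funext u; simp [hψ]; ring
    rw [this]; exact hint1.sub hint2
  -- reduce to interval integral
  have hsupp' : Function.support ψ ⊆ Set.Ioc (-(R'+1)) (R'+1) := by
    intro x hx
    have := hsupp hx
    constructor <;> [linarith [this.1]; linarith [this.2]]
  rw [← intervalIntegral.integral_eq_integral_of_support_subset hsupp']
  -- FTC off a countable set
  set s : Set ℝ := {x | ¬ContinuousAt h x} with hs
  have hscount : s.Countable := hmono.countable_not_continuousAt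
  set F : ℝ → ℝ := fun u => g u * Real.exp (-(W u)) with hF
  have hFcont : Continuous F := hgcont.mul hecont
  have hd : ∀ x ∈ Set.Ioo (min (-(R'+1)) (R'+1)) (max (-(R'+1)) (R'+1)) \ s,
      HasDerivAt F (ψ x) x := by
    intro x hx
    have hhx : ContinuousAt h x := not_not.1 hx.2
    have hWd : HasDerivAt W (h x) x := by
      rw [hWfun]
      exact intervalIntegral.integral_hasDerivAt_right (hInt 0 x)
        (hmono.measurable.stronglyMeasurable.stronglyMeasurableAtFilter) hhx
    have hed : HasDerivAt (fun u => Real.exp (-(W u))) (Real.exp (-(W x)) * (-(h x))) x :=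
      (hWd.neg).exp
    have hgd : HasDerivAt g (deriv g x) x := (hgdiff x).hasDerivAt
    have : HasDerivAt (fun u => g u * Real.exp (-(W u)))
        (deriv g x * Real.exp (-(W x)) + g x * (Real.exp (-(W x)) * -(h x))) x := hgd.mul hed
    convert this using 1
    show (deriv g x - g x * h x) * Real.exp (-(W x)) = _; ring
  have := MeasureTheory.integral_eq_of_hasDerivAt_off_countable F ψ hscount
    (hFcont.continuousOn) hd (hintψ.intervalIntegrable)
  rw [this]
  have h1 : g (R'+1) = 0 := image_eq_zero_of_notMem_tsupport (by
    intro hmem; have := hR' hmem; linarith [this.2])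
  have h2 : g (-(R'+1)) = 0 := image_eq_zero_of_notMem_tsupport (by
    intro hmem; have := hR' hmem; linarith [this.1])
  simp only [hF]
  rw [h1, h2, zero_mul, zero_mul, sub_zero]

lemma aux_integrable_mono (k g : ℝ → ℝ) (hk : Monotone k ∨ Antitone k)
    (hg : Continuous g) (hgc : HasCompactSupport g) :
    Integrable (fun u => k u * g u) := by
  obtain ⟨R, hR⟩ := hgc.isCompact.isBounded.subset_closedBall 0
  have hsub : tsupport g ⊆ Set.Icc (-R) R := by
    intro x hx
    have := hR hx
    rw [Metric.mem_closedBall, Real.dist_eq, sub_zero] at this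
    exact abs_le.1 this
  have hkm : AEStronglyMeasurable k volume := by
    rcases hk with hk | hk
    · exact hk.measurable.aestronglyMeasurable
    · exact hk.measurable.aestronglyMeasurable
  refine aux_integrable_mul k g hkm hg hgc (max |k (-R)| |k R|) ?_
  intro x hx
  rcases hk with hk | hk
  · exact abs_le_max_abs_abs (hk (hsub hx).1) (hk (hsub hx).2)
  · rw [max_comm]
    exact abs_le_max_abs_abs (hk (hsub hx).2) (hk (hsub hx).1)

/-- With `w`, `W`, `Z` as before, the measure
`μ({ε} × du) = (2Z)⁻¹ e^{-W(u)} du` on `{-1,+1} × ℝ` is stationary for the generator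
`(Gf)(ε,u) = ε ∂ᵤ f(ε,u) + w(εu) (f(-ε,u) - f(ε,u))`: for every `f` whose sections
`u ↦ f ε u`, `ε = ±1`, are continuously differentiable with compact support,
`∑_{ε = ±1} ∫ (Gf)(ε,u) (2Z)⁻¹ e^{-W(u)} du = 0`. -/
theorem stmt_5 (w : ℝ → ℝ) (hw_pos : ∀ x, 0 < w x) (hw_mono : Monotone w)
    (hw_nconst : ∃ a b : ℝ, w a ≠ w b)
    (W : ℝ → ℝ) (hW : ∀ u, W u = ∫ v in (0:ℝ)..u, (w v - w (-v)))
    (Z : ℝ) (hZ : Z = ∫ v, Real.exp (-(W v)))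
    (f : ℝ → ℝ → ℝ)
    (hf1 : ContDiff ℝ 1 (f 1)) (hf1c : HasCompactSupport (f 1))
    (hfm1 : ContDiff ℝ 1 (f (-1))) (hfm1c : HasCompactSupport (f (-1))) :
    ∑ ε ∈ ({-1, 1} : Finset ℝ),
      ∫ u, (ε * deriv (f ε) u + w (ε * u) * (f (-ε) u - f ε u)) *
        ((2 * Z)⁻¹ * Real.exp (-(W u))) = 0 := by
  have hd1 : Differentiable ℝ (f 1) := hf1.differentiable one_ne_zero
  have hdm : Differentiable ℝ (f (-1)) := hfm1.differentiable one_ne_zero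
  set e : ℝ → ℝ := fun u => Real.exp (-(W u)) with he
  set h : ℝ → ℝ := fun v => w v - w (-v) with hh
  have hhmono : Monotone h := by
    intro a b hab
    have h1 := hw_mono hab
    have h2 := hw_mono (neg_le_neg hab)
    simp only [hh]
    linarith
  set g : ℝ → ℝ := fun u => f 1 u - f (-1) u with hg
  have hgC : ContDiff ℝ 1 g := hf1.sub hfm1
  have hgc : HasCompactSupport g := hf1c.comp₂_left hfm1c (sub_zero 0)
  have hkey : ∫ u, (deriv g u - g u * h u) * e u = 0 := aux_key h hhmono g hgC hgc W hW
  -- continuity of `e`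
  have hInt : ∀ a b : ℝ, IntervalIntegrable h volume a b := fun a b => hhmono.intervalIntegrable
  have hWcont : Continuous W := by
    have : W = fun u => ∫ v in (0:ℝ)..u, h v := funext hW
    rw [this]; exact intervalIntegral.continuous_primitive hInt 0
  have hecont : Continuous e := hWcont.neg.rexp
  -- integrability pieces
  have hintD1 : Integrable (fun u => deriv (f 1) u * e u) :=
    ((hf1.continuous_deriv le_rfl).mul hecont).integrable_of_hasCompactSupport
      (hf1c.deriv.mul_right)
  have hintDm : Integrable (fun u => deriv (f (-1)) u * e u) :=
    ((hfm1.continuous_deriv le_rfl).mul hecont).integrable_of_hasCompactSupport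
      (hfm1c.deriv.mul_right)
  have hintW1 : Integrable (fun u => w u * ((f (-1) u - f 1 u) * e u)) :=
    aux_integrable_mono w _ (Or.inl hw_mono)
      (((hfm1.continuous).sub (hf1.continuous)).mul hecont) ((hfm1c.comp₂_left hf1c (sub_zero 0)).mul_right)
  have hintWm : Integrable (fun u => w (-u) * ((f 1 u - f (-1) u) * e u)) :=
    aux_integrable_mono (fun u => w (-u)) _
      (Or.inr (fun a b hab => hw_mono (neg_le_neg hab)))
      (((hf1.continuous).sub (hfm1.continuous)).mul hecont) ((hf1c.comp₂_left hfm1c (sub_zero 0)).mul_right)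
  have hAm : Integrable (fun u => (-deriv (f (-1)) u + w (-u) * (f 1 u - f (-1) u)) * e u) := by
    have heq : (fun u => (-deriv (f (-1)) u + w (-u) * (f 1 u - f (-1) u)) * e u)
        = fun u => -(deriv (f (-1)) u * e u) + w (-u) * ((f 1 u - f (-1) u) * e u) := by
      funext u; ring
    rw [heq]; exact hintDm.neg.add hintWm
  have hAp : Integrable (fun u => (deriv (f 1) u + w u * (f (-1) u - f 1 u)) * e u) := by
    have heq : (fun u => (deriv (f 1) u + w u * (f (-1) u - f 1 u)) * e u)
        = fun u => deriv (f 1) u * e u + w u * ((f (-1) u - f 1 u) * e u) := by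
      funext u; ring
    rw [heq]; exact hintD1.add hintW1
  have hsum : (∫ u, (-deriv (f (-1)) u + w (-u) * (f 1 u - f (-1) u)) * e u)
      + (∫ u, (deriv (f 1) u + w u * (f (-1) u - f 1 u)) * e u) = 0 := by
    rw [← integral_add hAm hAp]
    rw [← hkey]
    congr 1
    funext u
    have hder : deriv g u = deriv (f 1) u - deriv (f (-1)) u := by
      rw [hg]; exact deriv_sub (hd1 u) (hdm u)
    rw [hder]
    simp only [hg, hh, hder]
    ring
  rw [Finset.sum_insert (by norm_num), Finset.sum_singleton]
  simp only [neg_neg, one_mul, neg_one_mul]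
  have t1 : ∫ u, (-deriv (f (-1)) u + w (-u) * (f 1 u - f (-1) u)) * ((2 * Z)⁻¹ * e u)
      = (2 * Z)⁻¹ * ∫ u, (-deriv (f (-1)) u + w (-u) * (f 1 u - f (-1) u)) * e u := by
    rw [← integral_const_mul]; congr 1; funext u; ring
  have t2 : ∫ u, (deriv (f 1) u + w u * (f (-1) u - f 1 u)) * ((2 * Z)⁻¹ * e u)
      = (2 * Z)⁻¹ * ∫ u, (deriv (f 1) u + w u * (f (-1) u - f 1 u)) * e u := by
    rw [← integral_const_mul]; congr 1; funext u; ring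
  rw [t1, t2, ← mul_add, hsum, mul_zero]
end

section
/- There exist constants C < ∞ and γ > 0 such that P(A_t > x) ≤ C e^{−γ x} for all t ≥ 0 and all x ≥ 0, with C and γ not depending on t and x. -/
open MeasureTheory ProbabilityTheory
open scoped ENNReal

/-- Partial sums `S n = Z₁ + ⋯ + Z_n` (with `S 0 = 0`) of the sequence `Z`. -/
noncomputable def renewalSum {Ω : Type*} (Z : ℕ → Ω → ℝ) (n : ℕ) (ω : Ω) : ℝ :=
  ∑ i ∈ Finset.range n, Z i ω

/-- `ν_t = max {n ≥ 0 : S_n ≤ t}` (finite almost surely). -/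
noncomputable def renewalCount {Ω : Type*} (Z : ℕ → Ω → ℝ) (t : ℝ) (ω : Ω) : ℕ :=
  sSup {n : ℕ | renewalSum Z n ω ≤ t}

/-- The age `A_t = t - S_{ν_t}`. -/
noncomputable def renewalAge {Ω : Type*} (Z : ℕ → Ω → ℝ) (t : ℝ) (ω : Ω) : ℝ :=
  t - renewalSum Z (renewalCount Z t ω) ω

set_option linter.unusedSectionVars false

section helpers

variable {Ω : Type*} [MeasurableSpace Ω] {μ : Measure Ω} [IsProbabilityMeasure μ]
  {Z : ℕ → Ω → ℝ}

lemma measSum (hmeas : ∀ k, Measurable (Z k)) (s : Finset ℕ) :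
    Measurable (fun ω => ∑ i ∈ s, Z i ω) :=
  Finset.measurable_sum s (fun i _ => hmeas i)

lemma indep_Ico_single (hmeas : ∀ k, Measurable (Z k))
    (hindep : iIndepFun Z μ) (m n : ℕ) :
    IndepFun (fun ω => ∑ i ∈ Finset.Ico m n, Z i ω) (Z n) μ := by
  have h := hindep.indepFun_finsetSum_of_notMem hmeas
    (s := Finset.Ico m n) (i := n) (by simp)
  have : (∑ j ∈ Finset.Ico m n, Z j) = fun ω => ∑ i ∈ Finset.Ico m n, Z i ω := by
    funext ω; simp [Finset.sum_apply]
  rwa [this] at h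

lemma renewalSum_measurable (hmeas : ∀ k, Measurable (Z k)) (n : ℕ) :
    Measurable (renewalSum Z n) := measSum hmeas _

lemma meas_expneg {l : ℝ} (f : Ω → ℝ) (hf : Measurable f) :
    Measurable (fun ω => ENNReal.ofReal (Real.exp (-(l * f ω)))) :=
  ((hf.const_mul l).neg.exp).ennreal_ofReal

lemma exp_int_Ico (hmeas : ∀ k, Measurable (Z k))
    (hindep : iIndepFun Z μ)
    (hident : ∀ k, IdentDistrib (Z k) (Z 0) μ μ)
    {l : ℝ} {ρ : ℝ≥0∞}
    (hρ : ∫⁻ ω, ENNReal.ofReal (Real.exp (-(l * Z 0 ω))) ∂μ ≤ ρ)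
    (m k : ℕ) :
    ∫⁻ ω, ENNReal.ofReal (Real.exp (-(l * ∑ i ∈ Finset.Ico m (m + k), Z i ω))) ∂μ ≤ ρ ^ k := by
  induction k with
  | zero => simp
  | succ k ih =>
    have hstep : ∀ ω, (ENNReal.ofReal (Real.exp (-(l * ∑ i ∈ Finset.Ico m (m + (k+1)), Z i ω))))
        = ENNReal.ofReal (Real.exp (-(l * ∑ i ∈ Finset.Ico m (m + k), Z i ω)))
          * ENNReal.ofReal (Real.exp (-(l * Z (m + k) ω))) := by
      intro ω
      rw [← ENNReal.ofReal_mul (Real.exp_nonneg _), ← Real.exp_add]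
      congr 2
      rw [show m + (k+1) = (m+k) + 1 by omega, Finset.sum_Ico_succ_top (by omega)]
      ring
    simp only [hstep]
    have hind : IndepFun (fun ω => ENNReal.ofReal (Real.exp (-(l * ∑ i ∈ Finset.Ico m (m+k), Z i ω))))
        (fun ω => ENNReal.ofReal (Real.exp (-(l * Z (m+k) ω)))) μ := by
      have := (indep_Ico_single hmeas hindep m (m+k)).comp
        (φ := fun u : ℝ => ENNReal.ofReal (Real.exp (-(l * u))))
        (ψ := fun u : ℝ => ENNReal.ofReal (Real.exp (-(l * u))))
        (((measurable_id.const_mul l).neg.exp).ennreal_ofReal)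
        (((measurable_id.const_mul l).neg.exp).ennreal_ofReal)
      exact this
    rw [show (fun ω => ENNReal.ofReal (Real.exp (-(l * ∑ i ∈ Finset.Ico m (m+k), Z i ω)))
          * ENNReal.ofReal (Real.exp (-(l * Z (m+k) ω))))
        = (fun ω => ENNReal.ofReal (Real.exp (-(l * ∑ i ∈ Finset.Ico m (m+k), Z i ω))))
          * (fun ω => ENNReal.ofReal (Real.exp (-(l * Z (m+k) ω)))) from rfl,
      lintegral_mul_eq_lintegral_mul_lintegral_of_indepFun
        (meas_expneg _ (measSum hmeas _)) (meas_expneg _ (hmeas _)) hind]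
    have h2 : ∫⁻ ω, ENNReal.ofReal (Real.exp (-(l * Z (m+k) ω))) ∂μ ≤ ρ := by
      have hid := (hident (m+k)).comp
        (u := fun u : ℝ => ENNReal.ofReal (Real.exp (-(l * u))))
        (((measurable_id.const_mul l).neg.exp).ennreal_ofReal)
      have h3 := hid.lintegral_eq
      simp only [Function.comp_def] at h3
      rw [h3]; exact hρ
    calc _ ≤ ρ ^ k * ρ := mul_le_mul' ih h2
    _ = ρ ^ (k+1) := (pow_succ ρ k).symm

lemma markov_Ico (hmeas : ∀ k, Measurable (Z k))
    (hindep : iIndepFun Z μ)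
    (hident : ∀ k, IdentDistrib (Z k) (Z 0) μ μ)
    {l : ℝ} {ρ : ℝ≥0∞}
    (hρ : ∫⁻ ω, ENNReal.ofReal (Real.exp (-(l * Z 0 ω))) ∂μ ≤ ρ)
    (hl : 0 ≤ l) (m n : ℕ) (hmn : m ≤ n) (c : ℝ) :
    μ {ω | ∑ i ∈ Finset.Ico m n, Z i ω ≤ c}
      ≤ ENNReal.ofReal (Real.exp (l * c)) * ρ ^ (n - m) := by
  have hs : MeasurableSet {ω | ∑ i ∈ Finset.Ico m n, Z i ω ≤ c} :=
    measurableSet_le (measSum hmeas _) measurable_const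
  calc μ {ω | ∑ i ∈ Finset.Ico m n, Z i ω ≤ c}
      = ∫⁻ ω, {ω | ∑ i ∈ Finset.Ico m n, Z i ω ≤ c}.indicator 1 ω ∂μ :=
        (lintegral_indicator_one hs).symm
    _ ≤ ∫⁻ ω, ENNReal.ofReal (Real.exp (l * c))
          * ENNReal.ofReal (Real.exp (-(l * ∑ i ∈ Finset.Ico m n, Z i ω))) ∂μ := by
        apply lintegral_mono
        intro ω
        by_cases h : ω ∈ {ω | ∑ i ∈ Finset.Ico m n, Z i ω ≤ c}
        · rw [Set.indicator_of_mem h]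
          show (1:ℝ≥0∞) ≤ ENNReal.ofReal (Real.exp (l * c))
            * ENNReal.ofReal (Real.exp (-(l * ∑ i ∈ Finset.Ico m n, Z i ω)))
          rw [← ENNReal.ofReal_mul (Real.exp_nonneg _), ← Real.exp_add]
          refine ENNReal.one_le_ofReal.mpr (Real.one_le_exp ?_)
          have hc : ∑ i ∈ Finset.Ico m n, Z i ω ≤ c := h
          nlinarith
        · rw [Set.indicator_of_notMem h]; exact zero_le
    _ = ENNReal.ofReal (Real.exp (l * c))
          * ∫⁻ ω, ENNReal.ofReal (Real.exp (-(l * ∑ i ∈ Finset.Ico m n, Z i ω))) ∂μ := by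
        rw [lintegral_const_mul _ (meas_expneg _ (measSum hmeas _))]
    _ ≤ ENNReal.ofReal (Real.exp (l * c)) * ρ ^ (n - m) := by
        gcongr
        have := exp_int_Ico hmeas hindep hident hρ m (n - m)
        rwa [show m + (n - m) = n by omega] at this


lemma renewalSum_mono (hpos : ∀ k ω, 0 < Z k ω) (ω : Ω) :
    StrictMono (fun n => renewalSum Z n ω) := by
  apply strictMono_nat_of_lt_succ
  intro n
  simp only [renewalSum, Finset.sum_range_succ]
  exact lt_add_of_pos_right _ (hpos n ω)

lemma renewalSum_nonneg (hpos : ∀ k ω, 0 < Z k ω) (n : ℕ) (ω : Ω) :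
    0 ≤ renewalSum Z n ω :=
  Finset.sum_nonneg fun i _ => (hpos i ω).le

lemma renewalSum_succ (n : ℕ) (ω : Ω) :
    renewalSum Z (n + 1) ω = renewalSum Z n ω + Z n ω := by
  simp [renewalSum, Finset.sum_range_succ]

/-- independence of the pair (S_k, S_{k+1}) and the block sum over [k+1, n) -/
lemma indep_pair_block (hmeas : ∀ k, Measurable (Z k))
    (hindep : iIndepFun Z μ) (k n : ℕ) :
    IndepFun (fun ω => (renewalSum Z k ω, renewalSum Z (k+1) ω))
      (fun ω => ∑ i ∈ Finset.Ico (k+1) n, Z i ω) μ := by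
  classical
  have hdisj : Disjoint (Finset.range (k+1)) (Finset.Ico (k+1) n) := by
    simp only [Finset.disjoint_left, Finset.mem_range, Finset.mem_Ico]
    omega
  have base := hindep.indepFun_finset (Finset.range (k+1)) (Finset.Ico (k+1) n) hdisj hmeas
  have h1 : Measurable (fun g : ((Finset.range (k+1) : Finset ℕ) → ℝ) =>
      ((∑ i ∈ Finset.univ.filter (fun i : (Finset.range (k+1) : Finset ℕ) => (i : ℕ) < k), g i),
        ∑ i, g i)) := by
    exact (Finset.measurable_sum _ (fun i _ => measurable_pi_apply i)).prodMk
      (Finset.measurable_sum _ (fun i _ => measurable_pi_apply i))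
  have h2 : Measurable (fun g : ((Finset.Ico (k+1) n : Finset ℕ) → ℝ) => ∑ i, g i) :=
    Finset.measurable_sum _ (fun i _ => measurable_pi_apply i)
  have comp := base.comp h1 h2
  have e1 : ((fun g : ((Finset.range (k+1) : Finset ℕ) → ℝ) =>
      ((∑ i ∈ Finset.univ.filter (fun i : (Finset.range (k+1) : Finset ℕ) => (i : ℕ) < k), g i),
        ∑ i, g i)) ∘ (fun ω (i : (Finset.range (k+1) : Finset ℕ)) => Z i ω))
      = fun ω => (renewalSum Z k ω, renewalSum Z (k+1) ω) := by
    funext ω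
    simp only [Function.comp_apply, Prod.mk.injEq]
    constructor
    · rw [Finset.sum_filter, Finset.univ_eq_attach, Finset.sum_attach _
        (fun j => if j < k then Z j ω else 0), ← Finset.sum_filter]
      have : (Finset.range (k+1)).filter (fun i => i < k) = Finset.range k := by
        ext i; simp; omega
      rw [this]; rfl
    · rw [Finset.univ_eq_attach, Finset.sum_attach _ (fun j => Z j ω)]; rfl
  have e2 : ((fun g : ((Finset.Ico (k+1) n : Finset ℕ) → ℝ) => ∑ i, g i)
      ∘ (fun ω (i : (Finset.Ico (k+1) n : Finset ℕ)) => Z i ω))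
      = fun ω => ∑ i ∈ Finset.Ico (k+1) n, Z i ω := by
    funext ω
    simp only [Function.comp_apply]
    rw [Finset.univ_eq_attach, Finset.sum_attach _ (fun j => Z j ω)]
  rwa [e1, e2] at comp


lemma renewal_bound (hmeas : ∀ k, Measurable (Z k))
    (hindep : iIndepFun Z μ)
    (hident : ∀ k, IdentDistrib (Z k) (Z 0) μ μ)
    (hpos : ∀ k ω, 0 < Z k ω)
    {l : ℝ} {ρ : ℝ≥0∞}
    (hρ : ∫⁻ ω, ENNReal.ofReal (Real.exp (-(l * Z 0 ω))) ∂μ ≤ ρ)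
    (hl : 0 ≤ l) (hρ1 : ρ < 1) (a : ℝ) :
    ∑' n, μ {ω | a < renewalSum Z n ω ∧ renewalSum Z n ω ≤ a + 1}
      ≤ ENNReal.ofReal (Real.exp l) * (1 - ρ)⁻¹ * 2 := by
  classical
  set c : ℝ≥0∞ := ENNReal.ofReal (Real.exp l) with hc
  set E : ℕ → Set Ω := fun k => {ω | renewalSum Z k ω ≤ a ∧ a < renewalSum Z (k+1) ω} with hE
  have hmeasE : ∀ k, MeasurableSet (E k) :=
    fun k => (measurableSet_le (renewalSum_measurable hmeas k) measurable_const).inter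
      (measurableSet_lt measurable_const (renewalSum_measurable hmeas (k+1)))
  have hAn : ∀ n, μ {ω | a < renewalSum Z n ω ∧ renewalSum Z n ω ≤ a + 1}
      ≤ c * ρ ^ n + ∑ k ∈ Finset.range n, μ (E k) * (c * ρ ^ (n - (k+1))) := by
    intro n
    have hincl : {ω | a < renewalSum Z n ω ∧ renewalSum Z n ω ≤ a + 1}
        ⊆ {ω | ∑ i ∈ Finset.Ico 0 n, Z i ω ≤ 1}
          ∪ ⋃ k ∈ Finset.range n, (E k ∩ {ω | ∑ i ∈ Finset.Ico (k+1) n, Z i ω ≤ 1}) := by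
      intro ω hω
      obtain ⟨h1, h2⟩ := hω
      have hex : ∃ j, a < renewalSum Z j ω := ⟨n, h1⟩
      rcases hfind : Nat.find hex with _ | k
      · left
        have h0 : a < renewalSum Z 0 ω := by
          have := Nat.find_spec hex
          rwa [hfind] at this
        have h00 : renewalSum Z 0 ω = 0 := by simp [renewalSum]
        have : ∑ i ∈ Finset.Ico 0 n, Z i ω = renewalSum Z n ω := by
          unfold renewalSum
          rw [Finset.range_eq_Ico]
        rw [Set.mem_setOf_eq, this]
        rw [h00] at h0
        linarith
      · right
        have hklt : Nat.find hex ≤ n := Nat.find_le h1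
        have hkn : k + 1 ≤ n := by omega
        have hspec : a < renewalSum Z (k+1) ω := by
          have := Nat.find_spec hex
          rwa [hfind] at this
        have hmin : ¬ a < renewalSum Z k ω := by
          apply Nat.find_min hex
          omega
        refine Set.mem_biUnion (Finset.mem_range.mpr (by omega : k < n)) ⟨⟨not_lt.mp hmin, hspec⟩, ?_⟩
        have hsub : ∑ i ∈ Finset.Ico (k+1) n, Z i ω
            = renewalSum Z n ω - renewalSum Z (k+1) ω := by
          rw [renewalSum, renewalSum, ← Finset.sum_Ico_eq_sub _ hkn]
        rw [Set.mem_setOf_eq, hsub]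
        linarith
    calc μ {ω | a < renewalSum Z n ω ∧ renewalSum Z n ω ≤ a + 1}
        ≤ μ ({ω | ∑ i ∈ Finset.Ico 0 n, Z i ω ≤ 1}
            ∪ ⋃ k ∈ Finset.range n, (E k ∩ {ω | ∑ i ∈ Finset.Ico (k+1) n, Z i ω ≤ 1})) :=
          measure_mono hincl
      _ ≤ μ {ω | ∑ i ∈ Finset.Ico 0 n, Z i ω ≤ 1}
            + μ (⋃ k ∈ Finset.range n, (E k ∩ {ω | ∑ i ∈ Finset.Ico (k+1) n, Z i ω ≤ 1})) :=
          measure_union_le _ _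
      _ ≤ c * ρ ^ n + ∑ k ∈ Finset.range n, μ (E k) * (c * ρ ^ (n - (k+1))) := by
          gcongr
          · have := markov_Ico hmeas hindep hident hρ hl 0 n (Nat.zero_le n) 1
            simpa using this
          · refine (measure_biUnion_finset_le _ _).trans ?_
            apply Finset.sum_le_sum
            intro k hk
            have hkn : k + 1 ≤ n := Finset.mem_range.mp hk
            have hip := indep_pair_block hmeas hindep k n
            have hprod := hip.measure_inter_preimage_eq_mul
              (s := Set.Iic a ×ˢ Set.Ioi a) (t := Set.Iic (1:ℝ))
              (measurableSet_Iic.prod measurableSet_Ioi) measurableSet_Iic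
            have hsetE : (fun ω => (renewalSum Z k ω, renewalSum Z (k+1) ω)) ⁻¹'
                (Set.Iic a ×ˢ Set.Ioi a) = E k := by
              ext ω; simp [hE, Set.mem_preimage, Set.mem_prod, and_comm]
            have hsetW : (fun ω => ∑ i ∈ Finset.Ico (k+1) n, Z i ω) ⁻¹' (Set.Iic (1:ℝ))
                = {ω | ∑ i ∈ Finset.Ico (k+1) n, Z i ω ≤ 1} := rfl
            rw [hsetE, hsetW] at hprod
            rw [hprod]
            gcongr
            have := markov_Ico hmeas hindep hident hρ hl (k+1) n hkn 1
            simpa using this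
  have hdisj2 : ∀ i j : ℕ, i < j → Disjoint (E i) (E j) := by
    intro i j hij
    rw [Set.disjoint_left]
    rintro ω ⟨_, hi2⟩ ⟨hj1, _⟩
    have hmono := (renewalSum_mono hpos ω).monotone (show i + 1 ≤ j by omega)
    linarith
  have hsumE : ∀ N, ∑ k ∈ Finset.range N, μ (E k) ≤ 1 := by
    intro N
    rw [← measure_biUnion_finset ?_ (fun k _ => hmeasE k)]
    · exact prob_le_one
    · intro i hi j hj hij
      rcases Ne.lt_or_gt hij with h | h
      · exact hdisj2 i j h
      · exact (hdisj2 j i h).symm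
  have key : ∀ N, ∑ n ∈ Finset.range N,
      μ {ω | a < renewalSum Z n ω ∧ renewalSum Z n ω ≤ a + 1}
      ≤ c * (1 - ρ)⁻¹ * 2 := by
    intro N
    have hgeo : ∀ M : ℕ, ∑ i ∈ Finset.range M, ρ ^ i ≤ (1 - ρ)⁻¹ :=
      fun M => (ENNReal.sum_le_tsum _).trans (le_of_eq (ENNReal.tsum_geometric ρ))
    calc ∑ n ∈ Finset.range N, μ {ω | a < renewalSum Z n ω ∧ renewalSum Z n ω ≤ a + 1}
        ≤ ∑ n ∈ Finset.range N,
            (c * ρ ^ n + ∑ k ∈ Finset.range n, μ (E k) * (c * ρ ^ (n - (k+1)))) :=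
          Finset.sum_le_sum (fun n _ => hAn n)
      _ = ∑ n ∈ Finset.range N, c * ρ ^ n
          + ∑ n ∈ Finset.range N, ∑ k ∈ Finset.range n, μ (E k) * (c * ρ ^ (n - (k+1))) :=
          Finset.sum_add_distrib
      _ ≤ c * (1 - ρ)⁻¹ + c * (1 - ρ)⁻¹ := by
          gcongr
          · rw [← Finset.mul_sum]
            gcongr
            exact hgeo N
          · have hswap : ∑ n ∈ Finset.range N, ∑ k ∈ Finset.range n,
                μ (E k) * (c * ρ ^ (n - (k+1)))
                = ∑ k ∈ Finset.range N, ∑ n ∈ Finset.Ico (k+1) N,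
                    μ (E k) * (c * ρ ^ (n - (k+1))) := by
              rw [Finset.sum_sigma', Finset.sum_sigma']
              refine Finset.sum_nbij' (fun p => ⟨p.2, p.1⟩) (fun p => ⟨p.2, p.1⟩)
                ?_ ?_ ?_ ?_ ?_ <;> simp <;> omega
            rw [hswap]
            calc ∑ k ∈ Finset.range N, ∑ n ∈ Finset.Ico (k+1) N,
                  μ (E k) * (c * ρ ^ (n - (k+1)))
                = ∑ k ∈ Finset.range N,
                    μ (E k) * (c * ∑ i ∈ Finset.range (N - (k+1)), ρ ^ i) := by
                  refine Finset.sum_congr rfl (fun k _ => ?_)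
                  rw [Finset.sum_Ico_eq_sum_range]
                  simp only [Nat.add_sub_cancel_left, Finset.mul_sum]
              _ ≤ ∑ k ∈ Finset.range N, μ (E k) * (c * (1 - ρ)⁻¹) := by
                  gcongr with k hk
                  exact hgeo _
              _ = (∑ k ∈ Finset.range N, μ (E k)) * (c * (1 - ρ)⁻¹) :=
                  (Finset.sum_mul _ _ _).symm
              _ ≤ 1 * (c * (1 - ρ)⁻¹) := by gcongr; exact hsumE N
              _ = c * (1 - ρ)⁻¹ := one_mul _
      _ = c * (1 - ρ)⁻¹ * 2 := by ring
  exact ENNReal.tsum_le_of_sum_range_le key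

end helpers

/-- Let `(Z_k)` be i.i.d. strictly positive random variables with
`P(Z₁ > x) ≤ C₀ e^{-γ₀ x}` for all `x ≥ 0`.  Then there are constants `C < ∞` and
`γ > 0` (independent of `t` and `x`) such that `P(A_t > x) ≤ C e^{-γ x}` for all
`t ≥ 0` and `x ≥ 0`. -/
theorem stmt_10 {Ω : Type*} [MeasurableSpace Ω] (μ : Measure Ω) [IsProbabilityMeasure μ]
    (Z : ℕ → Ω → ℝ) (hmeas : ∀ k, Measurable (Z k))
    (hindep : iIndepFun Z μ)
    (hident : ∀ k, IdentDistrib (Z k) (Z 0) μ μ)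
    (hpos : ∀ k ω, 0 < Z k ω)
    (C₀ γ₀ : ℝ) (hγ₀ : 0 < γ₀)
    (htail : ∀ x : ℝ, 0 ≤ x → μ {ω | x < Z 0 ω} ≤ ENNReal.ofReal (C₀ * Real.exp (-γ₀ * x))) :
    ∃ C γ : ℝ, 0 < γ ∧ ∀ t : ℝ, 0 ≤ t → ∀ x : ℝ, 0 ≤ x →
      μ {ω | x < renewalAge Z t ω} ≤ ENNReal.ofReal (C * Real.exp (-γ * x)) := by
  classical
  -- ### Step 1: choose `l` and `ρ < 1` with `∫ e^{-l Z} ≤ ρ`.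
  obtain ⟨k₀, hk₀⟩ : ∃ k : ℕ, μ {ω | Z 0 ω ≤ 1/(k+1:ℝ)} < ENNReal.ofReal (1/4) := by
    have hanti : Antitone (fun k : ℕ => {ω | Z 0 ω ≤ 1/(k+1:ℝ)}) := by
      intro i j hij ω hω
      simp only [Set.mem_setOf_eq] at hω ⊢
      have : (1:ℝ)/(j+1) ≤ 1/(i+1) := by
        apply one_div_le_one_div_of_le
        · positivity
        · exact_mod_cast by omega
      linarith
    have hempty : ⋂ k : ℕ, {ω | Z 0 ω ≤ 1/(k+1:ℝ)} = ∅ := by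
      ext ω
      simp only [Set.mem_iInter, Set.mem_setOf_eq, Set.mem_empty_iff_false, iff_false, not_forall]
      obtain ⟨k, hk⟩ := exists_nat_one_div_lt (hpos 0 ω)
      exact ⟨k, by push_neg; exact_mod_cast hk⟩
    have htd : Filter.Tendsto (fun k : ℕ => μ {ω | Z 0 ω ≤ 1/(k+1:ℝ)}) Filter.atTop (nhds 0) := by
      have := tendsto_measure_iInter_atTop (μ := μ)
        (s := fun k : ℕ => {ω | Z 0 ω ≤ 1/(k+1:ℝ)})
        (fun k => (measurableSet_le (hmeas 0) measurable_const).nullMeasurableSet)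
        hanti ⟨0, measure_ne_top μ _⟩
      rwa [hempty, measure_empty] at this
    have := htd.eventually_lt_const (show (0:ℝ≥0∞) < ENNReal.ofReal (1/4) by
      exact ENNReal.ofReal_pos.mpr (by norm_num))
    exact this.exists
  set l : ℝ := (k₀ + 1 : ℝ) with hl_def
  have hl : 0 ≤ l := by positivity
  set ρ : ℝ≥0∞ := ENNReal.ofReal (1/4 + Real.exp (-1)) with hρ_def
  have hρ1 : ρ < 1 := by
    rw [hρ_def]
    apply ENNReal.ofReal_lt_one.mpr
    have key : Real.exp (-1) * Real.exp 1 = 1 := by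
      rw [← Real.exp_add]; norm_num
    nlinarith [Real.exp_one_gt_d9, Real.exp_pos (-1)]
  have hρint : ∫⁻ ω, ENNReal.ofReal (Real.exp (-(l * Z 0 ω))) ∂μ ≤ ρ := by
    have hptwise : ∀ ω, ENNReal.ofReal (Real.exp (-(l * Z 0 ω)))
        ≤ {ω | Z 0 ω ≤ 1/(k₀+1:ℝ)}.indicator 1 ω + ENNReal.ofReal (Real.exp (-1)) := by
      intro ω
      simp only [Set.indicator_apply, Set.mem_setOf_eq]
      by_cases h : Z 0 ω ≤ 1/(k₀+1:ℝ)
      · rw [if_pos h]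
        have : ENNReal.ofReal (Real.exp (-(l * Z 0 ω))) ≤ 1 := by
          apply ENNReal.ofReal_le_one.mpr
          apply Real.exp_le_one_iff.mpr
          have := hpos 0 ω
          nlinarith
        calc ENNReal.ofReal (Real.exp (-(l * Z 0 ω))) ≤ 1 := this
          _ ≤ _ := le_self_add
      · rw [if_neg h]
        push_neg at h
        have hZl : 1 ≤ l * Z 0 ω := by
          rw [hl_def]
          rw [div_lt_iff₀ (by positivity)] at h
          nlinarith
        calc ENNReal.ofReal (Real.exp (-(l * Z 0 ω)))
            ≤ ENNReal.ofReal (Real.exp (-1)) := by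
              apply ENNReal.ofReal_le_ofReal
              apply Real.exp_le_exp.mpr
              linarith
          _ ≤ _ := le_add_self
    calc ∫⁻ ω, ENNReal.ofReal (Real.exp (-(l * Z 0 ω))) ∂μ
        ≤ ∫⁻ ω, ({ω | Z 0 ω ≤ 1/(k₀+1:ℝ)}.indicator 1 ω + ENNReal.ofReal (Real.exp (-1))) ∂μ :=
          lintegral_mono hptwise
      _ = μ {ω | Z 0 ω ≤ 1/(k₀+1:ℝ)} + ENNReal.ofReal (Real.exp (-1)) := by
          rw [lintegral_add_right _ measurable_const, lintegral_indicator_one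
            (measurableSet_le (hmeas 0) measurable_const), lintegral_const,
            measure_univ, mul_one]
      _ ≤ ENNReal.ofReal (1/4) + ENNReal.ofReal (Real.exp (-1)) :=
          add_le_add_left hk₀.le _
      _ = ρ := by
          rw [hρ_def, ENNReal.ofReal_add (by norm_num) (Real.exp_nonneg _)]
  -- ### Step 2: constants
  have hC₀1 : (1:ℝ≥0∞) ≤ ENNReal.ofReal C₀ := by
    have huniv : {ω | (0:ℝ) < Z 0 ω} = Set.univ := by
      ext ω; simp [hpos 0 ω]
    have h1 := htail 0 le_rfl
    rw [huniv, measure_univ] at h1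
    simpa using h1
  have hC₀ : 0 ≤ C₀ := by
    by_contra hlt
    push_neg at hlt
    rw [ENNReal.ofReal_eq_zero.mpr hlt.le] at hC₀1
    simp at hC₀1
  set D : ℝ≥0∞ := ENNReal.ofReal (Real.exp l) * (1 - ρ)⁻¹ * 2 with hD_def
  set q : ℝ≥0∞ := ENNReal.ofReal (Real.exp (-γ₀)) with hq_def
  have hq1 : q < 1 :=
    ENNReal.ofReal_lt_one.mpr (Real.exp_lt_one_iff.mpr (by linarith))
  have hsub_ne : ∀ r : ℝ≥0∞, r < 1 → (1 - r)⁻¹ ≠ ∞ := by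
    intro r hr
    rw [Ne, ENNReal.inv_eq_top, tsub_eq_zero_iff_le]
    exact not_le.mpr hr
  have hDfin : D ≠ ∞ := by
    rw [hD_def]
    exact ENNReal.mul_ne_top (ENNReal.mul_ne_top ENNReal.ofReal_ne_top (hsub_ne ρ hρ1))
      (by norm_num)
  set K : ℝ≥0∞ := ENNReal.ofReal C₀ * (D * (1 - q)⁻¹) with hK_def
  have hKfin : K ≠ ∞ :=
    ENNReal.mul_ne_top ENNReal.ofReal_ne_top (ENNReal.mul_ne_top hDfin (hsub_ne q hq1))
  refine ⟨K.toReal, γ₀, hγ₀, ?_⟩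
  intro t ht x hx
  by_cases hxt : t < x
  · -- the age is at most t, so the event is empty
    have : {ω | x < renewalAge Z t ω} = ∅ := by
      ext ω
      simp only [Set.mem_setOf_eq, Set.mem_empty_iff_false, iff_false, not_lt]
      have h0 : 0 ≤ renewalSum Z (renewalCount Z t ω) ω := renewalSum_nonneg hpos _ ω
      have : renewalAge Z t ω ≤ t := by
        unfold renewalAge; linarith
      linarith
    rw [this, measure_empty]
    exact zero_le
  push_neg at hxt
  set s : ℝ := t - x with hs_def
  have hs0 : 0 ≤ s := by linarith
  -- the bad (null) event
  set B : Set Ω := {ω | ∀ n, renewalSum Z n ω ≤ t} with hB_def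
  have hBnull : μ B = 0 := by
    have hBn : ∀ n, μ B ≤ ENNReal.ofReal (Real.exp (l * t)) * ρ ^ n := by
      intro n
      have hsub : B ⊆ {ω | ∑ i ∈ Finset.Ico 0 n, Z i ω ≤ t} := by
        intro ω hω
        have h5 := hω n
        unfold renewalSum at h5
        rwa [Finset.range_eq_Ico] at h5
      have := markov_Ico hmeas hindep hident hρint hl 0 n (Nat.zero_le n) t
      calc μ B ≤ μ {ω | ∑ i ∈ Finset.Ico 0 n, Z i ω ≤ t} := measure_mono hsub
        _ ≤ ENNReal.ofReal (Real.exp (l * t)) * ρ ^ (n - 0) := this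
        _ = ENNReal.ofReal (Real.exp (l * t)) * ρ ^ n := by rw [Nat.sub_zero]
    have htend : Filter.Tendsto (fun n : ℕ => ENNReal.ofReal (Real.exp (l * t)) * ρ ^ n)
        Filter.atTop (nhds 0) := by
      have h1 := ENNReal.tendsto_pow_atTop_nhds_zero_of_lt_one hρ1
      have := ENNReal.Tendsto.const_mul (a := ENNReal.ofReal (Real.exp (l * t))) h1
        (Or.inr ENNReal.ofReal_ne_top)
      rwa [mul_zero] at this
    have := ge_of_tendsto' htend (fun n => hBn n)
    exact le_antisymm this zero_le
  -- the good events
  set G : ℕ → Set Ω := fun n =>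
    {ω | renewalSum Z n ω ≤ s ∧ x + (s - renewalSum Z n ω) < Z n ω} with hG_def
  have hincl : {ω | x < renewalAge Z t ω} ⊆ B ∪ ⋃ n, G n := by
    intro ω hω
    by_cases hBc : ∀ n, renewalSum Z n ω ≤ t
    · exact Or.inl hBc
    · right
      push_neg at hBc
      obtain ⟨N, hN⟩ := hBc
      set ν := renewalCount Z t ω with hν_def
      have hbdd : BddAbove {n | renewalSum Z n ω ≤ t} := by
        refine ⟨N, fun n hn => ?_⟩
        by_contra h
        push_neg at h
        have := renewalSum_mono hpos ω h
        simp only at this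
        have hn' : renewalSum Z n ω ≤ t := hn
        linarith
      have hK0 : 0 ∈ {n | renewalSum Z n ω ≤ t} := by
        simp only [Set.mem_setOf_eq, renewalSum, Finset.range_zero, Finset.sum_empty]
        linarith
      have hmem : ν ∈ {n | renewalSum Z n ω ≤ t} := Nat.sSup_mem ⟨0, hK0⟩ hbdd
      have hν1 : renewalSum Z ν ω ≤ t := hmem
      have hν2 : t < renewalSum Z (ν+1) ω := by
        by_contra h
        push_neg at h
        have : ν + 1 ≤ ν := le_csSup hbdd h
        omega
      have hA : x < t - renewalSum Z ν ω := hω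
      refine Set.mem_iUnion.mpr ⟨ν, ?_, ?_⟩
      · simp only [hs_def]; linarith
      · have hzν : Z ν ω = renewalSum Z (ν+1) ω - renewalSum Z ν ω := by
          rw [renewalSum_succ]; ring
        simp only [hs_def, hzν]
        linarith
  -- slicing each good event
  have hGn : ∀ n : ℕ, μ (G n)
      ≤ ∑' j : ℕ, μ ((renewalSum Z n) ⁻¹' (Set.Ioc (s - j - 1) (s - j)))
        * ENNReal.ofReal (C₀ * Real.exp (-γ₀ * (x + j))) := by
    intro n
    have hslice : G n ⊆ ⋃ j : ℕ, ((renewalSum Z n) ⁻¹' (Set.Ioc (s - j - 1) (s - j))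
        ∩ (Z n) ⁻¹' (Set.Ioi (x + j))) := by
      intro ω hω
      obtain ⟨h1, h2⟩ := hω
      set u : ℝ := s - renewalSum Z n ω with hu_def
      have hu0 : 0 ≤ u := by simp only [hu_def]; linarith
      refine Set.mem_iUnion.mpr ⟨⌊u⌋₊, ?_, ?_⟩
      · have hfl : (⌊u⌋₊ : ℝ) ≤ u := Nat.floor_le hu0
        have hfu : u < ⌊u⌋₊ + 1 := Nat.lt_floor_add_one u
        simp only [Set.mem_preimage, Set.mem_Ioc]
        constructor
        · simp only [hu_def] at hfu; linarith
        · simp only [hu_def] at hfl; linarith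
      · have hfl : (⌊u⌋₊ : ℝ) ≤ u := Nat.floor_le hu0
        simp only [Set.mem_preimage, Set.mem_Ioi]
        calc x + (⌊u⌋₊:ℝ) ≤ x + u := by linarith
          _ < Z n ω := h2
    calc μ (G n) ≤ μ (⋃ j : ℕ, ((renewalSum Z n) ⁻¹' (Set.Ioc (s - j - 1) (s - j))
          ∩ (Z n) ⁻¹' (Set.Ioi (x + j)))) := measure_mono hslice
      _ ≤ ∑' j : ℕ, μ ((renewalSum Z n) ⁻¹' (Set.Ioc (s - j - 1) (s - j))
          ∩ (Z n) ⁻¹' (Set.Ioi (x + j))) := measure_iUnion_le _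
      _ ≤ _ := by
          apply ENNReal.tsum_le_tsum
          intro j
          have hind : IndepFun (renewalSum Z n) (Z n) μ := by
            have h := hindep.indepFun_finsetSum_of_notMem hmeas
              (s := Finset.range n) (i := n) (by simp)
            have heq : (∑ i ∈ Finset.range n, Z i) = renewalSum Z n := by
              funext ω; simp [renewalSum, Finset.sum_apply]
            rwa [heq] at h
          rw [hind.measure_inter_preimage_eq_mul _ _ measurableSet_Ioc measurableSet_Ioi]
          gcongr
          have hid := (hident n).measure_mem_eq (s := Set.Ioi (x + (j:ℝ))) measurableSet_Ioi
          rw [hid]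
          have := htail (x + j) (by positivity)
          exact this
  -- put everything together
  have hbound : μ {ω | x < renewalAge Z t ω} ≤ ENNReal.ofReal (C₀ * Real.exp (-γ₀ * x)) *
      (D * (1 - q)⁻¹) := by
    calc μ {ω | x < renewalAge Z t ω} ≤ μ (B ∪ ⋃ n, G n) := measure_mono hincl
      _ ≤ μ B + μ (⋃ n, G n) := measure_union_le _ _
      _ = μ (⋃ n, G n) := by rw [hBnull, zero_add]
      _ ≤ ∑' n, μ (G n) := measure_iUnion_le _
      _ ≤ ∑' n, ∑' j : ℕ, μ ((renewalSum Z n) ⁻¹' (Set.Ioc (s - j - 1) (s - j)))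
            * ENNReal.ofReal (C₀ * Real.exp (-γ₀ * (x + j))) :=
          ENNReal.tsum_le_tsum hGn
      _ = ∑' j : ℕ, ∑' n, μ ((renewalSum Z n) ⁻¹' (Set.Ioc (s - j - 1) (s - j)))
            * ENNReal.ofReal (C₀ * Real.exp (-γ₀ * (x + j))) := ENNReal.tsum_comm
      _ = ∑' j : ℕ, (∑' n, μ ((renewalSum Z n) ⁻¹' (Set.Ioc (s - j - 1) (s - j))))
            * ENNReal.ofReal (C₀ * Real.exp (-γ₀ * (x + j))) := by
          congr 1
          funext j
          rw [ENNReal.tsum_mul_right]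
      _ ≤ ∑' j : ℕ, D * ENNReal.ofReal (C₀ * Real.exp (-γ₀ * (x + j))) := by
          apply ENNReal.tsum_le_tsum
          intro j
          gcongr
          have hrb := renewal_bound hmeas hindep hident hpos hρint hl hρ1 (s - j - 1)
          have hsets : ∀ n : ℕ, (renewalSum Z n) ⁻¹' (Set.Ioc (s - j - 1) (s - j))
              = {ω | s - j - 1 < renewalSum Z n ω ∧ renewalSum Z n ω ≤ (s - j - 1) + 1} := by
            intro n
            ext ω
            simp only [Set.mem_preimage, Set.mem_Ioc, Set.mem_setOf_eq]
            constructor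
            · rintro ⟨p, q⟩; exact ⟨p, by linarith⟩
            · rintro ⟨p, q⟩; exact ⟨p, by linarith⟩
          simp only [hsets]
          exact hrb
      _ = D * ENNReal.ofReal (C₀ * Real.exp (-γ₀ * x)) * ∑' j : ℕ, q ^ j := by
          rw [← ENNReal.tsum_mul_left]
          congr 1
          funext j
          have hsplit : C₀ * Real.exp (-γ₀ * (x + j))
              = (C₀ * Real.exp (-γ₀ * x)) * Real.exp (-γ₀) ^ (j:ℕ) := by
            have harg : (-γ₀) * (x + (j:ℝ)) = (-γ₀ * x) + (j:ℕ) * (-γ₀) := by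
              push_cast; ring
            rw [harg, Real.exp_add, Real.exp_nat_mul]
            ring
          rw [hsplit, ENNReal.ofReal_mul (by positivity), ENNReal.ofReal_pow (Real.exp_nonneg _)]
          ring
      _ = ENNReal.ofReal (C₀ * Real.exp (-γ₀ * x)) * (D * (1 - q)⁻¹) := by
          rw [ENNReal.tsum_geometric]
          ring
  calc μ {ω | x < renewalAge Z t ω}
      ≤ ENNReal.ofReal (C₀ * Real.exp (-γ₀ * x)) * (D * (1 - q)⁻¹) := hbound
    _ = K * ENNReal.ofReal (Real.exp (-γ₀ * x)) := by
        rw [hK_def, ENNReal.ofReal_mul hC₀]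
        ring
    _ = ENNReal.ofReal (K.toReal * Real.exp (-γ₀ * x)) := by
        rw [ENNReal.ofReal_mul ENNReal.toReal_nonneg, ENNReal.ofReal_toReal hKfin]
end

section
/- Since Z_{ν_t+1} = A_t + R_t, there exist constants C < ∞ and γ > 0 such that P(Z_{ν_t+1} > x) ≤ C e^{−γ x} for all t ≥ 0 and all x ≥ 0, uniformly in t. -/
open MeasureTheory ProbabilityTheory
open scoped ENNReal

/-- The residual waiting time `R_t = S_{ν_t + 1} - t`. -/
noncomputable def renewalResidual {Ω : Type*} (Z : ℕ → Ω → ℝ) (t : ℝ) (ω : Ω) : ℝ :=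
  renewalSum Z (renewalCount Z t ω + 1) ω - t

namespace Stmt12Aux

open Filter Set

variable {Ω : Type*} [MeasurableSpace Ω] {μ : Measure Ω} {Z : ℕ → Ω → ℝ}

/-- The σ-algebra generated by the variables `Z i`, `i ∈ I`. -/
def mZ (Z : ℕ → Ω → ℝ) (I : Set ℕ) : MeasurableSpace Ω :=
  ⨆ i ∈ I, MeasurableSpace.comap (Z i) inferInstance

lemma measurable_mZ {I : Set ℕ} {i : ℕ} (hi : i ∈ I) : Measurable[mZ Z I] (Z i) := by
  have h : MeasurableSpace.comap (Z i) inferInstance ≤ mZ Z I :=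
    le_biSup (fun j => MeasurableSpace.comap (Z j) inferInstance) hi
  exact Measurable.of_comap_le h

lemma measurable_sum_mZ {I : Set ℕ} {s : Finset ℕ} (h : ∀ i ∈ s, i ∈ I) :
    Measurable[mZ Z I] (fun ω => ∑ i ∈ s, Z i ω) :=
  Finset.measurable_sum s (fun i hi => measurable_mZ (h i hi))

lemma measurable_S_mZ {I : Set ℕ} {n : ℕ} (h : ∀ i, i < n → i ∈ I) :
    Measurable[mZ Z I] (renewalSum Z n) :=
  measurable_sum_mZ (fun i hi => h i (Finset.mem_range.1 hi))

lemma indep_events (hmeas : ∀ k, Measurable (Z k))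
    (hindep : iIndepFun Z μ)
    {I J : Set ℕ} (hIJ : Disjoint I J) {E F : Set Ω}
    (hE : MeasurableSet[mZ Z I] E) (hF : MeasurableSet[mZ Z J] F) :
    μ (E ∩ F) = μ E * μ F := by
  have h : Indep (mZ Z I) (mZ Z J) μ :=
    indep_iSup_of_disjoint (fun i => (hmeas i).comap_le) hindep hIJ
  exact (Indep_iff _ _ _).1 h E F hE hF

/-- Chernoff-type bound for lower deviations of sums of the `Z i`. -/
lemma chernoff [IsProbabilityMeasure μ] (hmeas : ∀ k, Measurable (Z k))
    (hindep : iIndepFun Z μ)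
    (hident : ∀ k, IdentDistrib (Z k) (Z 0) μ μ)
    {lam : ℝ} (hlam : 0 < lam) (s : Finset ℕ) (c : ℝ) :
    μ {ω | ∑ i ∈ s, Z i ω ≤ c} ≤ ENNReal.ofReal (Real.exp (lam * c)) *
      (∫⁻ ω, ENNReal.ofReal (Real.exp (-(lam * Z 0 ω))) ∂μ) ^ s.card := by
  classical
  set φ : ℝ → ℝ≥0∞ := fun r => ENNReal.ofReal (Real.exp (-(lam * r))) with hφ
  have hφm : Measurable φ := ((measurable_id.const_mul lam).neg.exp).ennreal_ofReal
  have hg : iIndepFun (fun i => φ ∘ Z i) μ :=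
    hindep.comp _ (fun _ => hφm)
  have hgm : ∀ i, Measurable (φ ∘ Z i) := fun i => hφm.comp (hmeas i)
  have key : ∀ u : Finset ℕ,
      ∫⁻ ω, ∏ i ∈ u, φ (Z i ω) ∂μ = ∏ i ∈ u, ∫⁻ ω, φ (Z i ω) ∂μ := by
    intro u
    induction u using Finset.induction_on with
    | empty => simp
    | @insert j s' hj ih =>
      have hip : IndepFun (φ ∘ Z j) (∏ i ∈ s', φ ∘ Z i) μ :=
        (hg.indepFun_finsetProd_of_notMem hgm hj).symm
      have hpm : Measurable (∏ i ∈ s', φ ∘ Z i) := by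
        rw [Finset.prod_fn]
        exact Finset.measurable_prod _ (fun i _ => hgm i)
      calc ∫⁻ ω, ∏ i ∈ insert j s', φ (Z i ω) ∂μ
          = ∫⁻ ω, ((φ ∘ Z j) * ∏ i ∈ s', φ ∘ Z i) ω ∂μ := by
            apply lintegral_congr
            intro ω
            simp [Finset.prod_insert hj, Finset.prod_apply]
        _ = (∫⁻ ω, (φ ∘ Z j) ω ∂μ) * ∫⁻ ω, (∏ i ∈ s', φ ∘ Z i) ω ∂μ :=
            lintegral_mul_eq_lintegral_mul_lintegral_of_indepFun (hgm j) hpm hip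
        _ = ∏ i ∈ insert j s', ∫⁻ ω, φ (Z i ω) ∂μ := by
            rw [Finset.prod_insert hj, ← ih]
            congr 1
            apply lintegral_congr
            intro ω
            simp [Finset.prod_apply]
  have hsame : ∀ i, ∫⁻ ω, φ (Z i ω) ∂μ = ∫⁻ ω, φ (Z 0 ω) ∂μ := by
    intro i
    rw [← lintegral_map hφm (hmeas i), (hident i).map_eq, lintegral_map hφm (hmeas 0)]
  have hprod : ∫⁻ ω, ∏ i ∈ s, φ (Z i ω) ∂μ =
      (∫⁻ ω, ENNReal.ofReal (Real.exp (-(lam * Z 0 ω))) ∂μ) ^ s.card := by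
    rw [key, Finset.prod_congr rfl (fun i _ => hsame i), Finset.prod_const]
  set ε : ℝ≥0∞ := ENNReal.ofReal (Real.exp (-(lam * c))) with hε
  have hε0 : ε ≠ 0 := (ENNReal.ofReal_pos.2 (Real.exp_pos _)).ne'
  have hsub : {ω | ∑ i ∈ s, Z i ω ≤ c} ⊆ {ω | ε ≤ ∏ i ∈ s, φ (Z i ω)} := by
    intro ω hω
    show ε ≤ ∏ i ∈ s, φ (Z i ω)
    have h1 : ∏ i ∈ s, φ (Z i ω) = ENNReal.ofReal (Real.exp (-(lam * ∑ i ∈ s, Z i ω))) := by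
      have h2 : Real.exp (-(lam * ∑ i ∈ s, Z i ω)) = ∏ i ∈ s, Real.exp (-(lam * Z i ω)) := by
        rw [← Real.exp_sum]
        congr 1
        rw [Finset.mul_sum, ← Finset.sum_neg_distrib]
      rw [h2, ← ENNReal.ofReal_prod_of_nonneg (fun i _ => (Real.exp_pos _).le)]
    rw [h1, hε]
    refine ENNReal.ofReal_le_ofReal (Real.exp_le_exp.2 ?_)
    have : lam * ∑ i ∈ s, Z i ω ≤ lam * c := mul_le_mul_of_nonneg_left hω hlam.le
    linarith
  have hfm : Measurable (fun ω => ∏ i ∈ s, φ (Z i ω)) :=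
    Finset.measurable_prod _ (fun i _ => hgm i)
  have hmk := mul_meas_ge_le_lintegral₀ (μ := μ) hfm.aemeasurable ε
  calc μ {ω | ∑ i ∈ s, Z i ω ≤ c} ≤ μ {ω | ε ≤ ∏ i ∈ s, φ (Z i ω)} := measure_mono hsub
    _ = ε⁻¹ * (ε * μ {ω | ε ≤ ∏ i ∈ s, φ (Z i ω)}) := by
        rw [← mul_assoc, ENNReal.inv_mul_cancel hε0 ENNReal.ofReal_ne_top, one_mul]
    _ ≤ ε⁻¹ * ∫⁻ ω, ∏ i ∈ s, φ (Z i ω) ∂μ := mul_le_mul_right hmk _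
    _ = ENNReal.ofReal (Real.exp (lam * c)) *
        (∫⁻ ω, ENNReal.ofReal (Real.exp (-(lam * Z 0 ω))) ∂μ) ^ s.card := by
        rw [hprod]
        congr 1
        rw [hε, Real.exp_neg, ENNReal.ofReal_inv_of_pos (Real.exp_pos _), inv_inv]

set_option maxHeartbeats 1000000 in
/-- The expected number of partial sums falling in a window of length one is bounded,
uniformly in the location of the window. -/
lemma window [IsProbabilityMeasure μ] (hmeas : ∀ k, Measurable (Z k))
    (hindep : iIndepFun Z μ)
    (hident : ∀ k, IdentDistrib (Z k) (Z 0) μ μ)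
    {lam : ℝ} (hlam : 0 < lam) (a : ℝ) :
    ∑' n, μ {ω | a < renewalSum Z n ω ∧ renewalSum Z n ω ≤ a + 1} ≤
      ENNReal.ofReal (Real.exp (lam * 1)) *
        (1 - ∫⁻ ω, ENNReal.ofReal (Real.exp (-(lam * Z 0 ω))) ∂μ)⁻¹ := by
  classical
  set ρ : ℝ≥0∞ := ∫⁻ ω, ENNReal.ofReal (Real.exp (-(lam * Z 0 ω))) ∂μ with hρdef
  set EC : ℝ≥0∞ := ENNReal.ofReal (Real.exp (lam * 1)) with hEC
  set A : ℕ → Set Ω := fun n =>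
    {ω | a < renewalSum Z n ω ∧ renewalSum Z n ω ≤ a + 1} with hA
  have hS : ∀ n, Measurable (renewalSum Z n) := fun n =>
    Finset.measurable_sum _ (fun i _ => hmeas i)
  have hAmeas : ∀ n, MeasurableSet (A n) := fun n => (hS n) measurableSet_Ioc
  set F : ℕ → Set Ω := fun m => A m \ ⋃ (l : ℕ) (_ : l < m), A l with hF
  have hFA : ∀ m, F m ⊆ A m := fun m => diff_subset
  have hFmeas : ∀ m, MeasurableSet (F m) := fun m =>
    (hAmeas m).diff (MeasurableSet.iUnion fun l => MeasurableSet.iUnion fun _ => hAmeas l)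
  have hFdisj : ∀ {m m' : ℕ}, m < m' → Disjoint (F m) (F m') := by
    intro m m' h
    refine Set.disjoint_left.2 fun ω hm hm' => ?_
    exact hm'.2 (mem_iUnion.2 ⟨m, mem_iUnion.2 ⟨h, hFA m hm⟩⟩)
  have hFmZ : ∀ m, MeasurableSet[mZ Z (Set.Iio m)] (F m) := by
    intro m
    have hAl : ∀ l, l ≤ m → MeasurableSet[mZ Z (Set.Iio m)] (A l) := fun l hl =>
      (measurable_S_mZ (fun i hi => lt_of_lt_of_le hi hl)) measurableSet_Ioc
    exact (hAl m le_rfl).diff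
      (MeasurableSet.iUnion fun l => MeasurableSet.iUnion fun hl => hAl l hl.le)
  set D : ℕ → ℕ → Set Ω := fun m n => {ω | ∑ i ∈ Finset.Ico m n, Z i ω ≤ 1} with hD
  have hDmZ : ∀ m n, MeasurableSet[mZ Z (Set.Ici m)] (D m n) := fun m n =>
    (measurable_sum_mZ (fun i hi => (Finset.mem_Ico.1 hi).1)) measurableSet_Iic
  have hDbound : ∀ m n, μ (D m n) ≤ EC * ρ ^ (n - m) := by
    intro m n
    have h := chernoff hmeas hindep hident hlam (Finset.Ico m n) 1
    rw [Nat.card_Ico] at h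
    exact h
  have hkey : ∀ n, μ (A n) ≤ ∑ m ∈ Finset.range (n + 1), μ (F m) * (EC * ρ ^ (n - m)) := by
    intro n
    have hcover : A n ⊆ ⋃ m ∈ Finset.range (n + 1), F m ∩ A n := by
      intro ω hω
      have hex : ∃ m, ω ∈ A m := ⟨n, hω⟩
      have h1 : ω ∈ A (Nat.find hex) := Nat.find_spec hex
      have h2 : ω ∈ F (Nat.find hex) := by
        refine ⟨h1, fun hc => ?_⟩
        rw [mem_iUnion] at hc
        obtain ⟨l, hl⟩ := hc
        rw [mem_iUnion] at hl
        obtain ⟨hlm, hlA⟩ := hl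
        exact Nat.find_min hex hlm hlA
      have h3 : Nat.find hex ≤ n := Nat.find_min' hex hω
      exact mem_biUnion (Finset.mem_range.2 (Nat.lt_succ_of_le h3)) ⟨h2, hω⟩
    calc μ (A n) ≤ μ (⋃ m ∈ Finset.range (n + 1), F m ∩ A n) := measure_mono hcover
      _ ≤ ∑ m ∈ Finset.range (n + 1), μ (F m ∩ A n) := measure_biUnion_finset_le _ _
      _ ≤ ∑ m ∈ Finset.range (n + 1), μ (F m) * (EC * ρ ^ (n - m)) := by
          refine Finset.sum_le_sum fun m hm => ?_
          have hmn : m ≤ n := Nat.lt_succ_iff.1 (Finset.mem_range.1 hm)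
          have hincl : F m ∩ A n ⊆ F m ∩ D m n := by
            rintro ω ⟨hFω, hAω⟩
            refine ⟨hFω, ?_⟩
            have h1 : a < renewalSum Z m ω := (hFA m hFω).1
            have h2 : renewalSum Z n ω ≤ a + 1 := hAω.2
            have h3 : ∑ i ∈ Finset.Ico m n, Z i ω
                = renewalSum Z n ω - renewalSum Z m ω := by
              rw [renewalSum, renewalSum, Finset.sum_Ico_eq_sub _ hmn]
            show ∑ i ∈ Finset.Ico m n, Z i ω ≤ 1
            rw [h3]; linarith
          calc μ (F m ∩ A n) ≤ μ (F m ∩ D m n) := measure_mono hincl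
            _ = μ (F m) * μ (D m n) :=
                indep_events hmeas hindep (Set.Iio_disjoint_Ici le_rfl) (hFmZ m) (hDmZ m n)
            _ ≤ μ (F m) * (EC * ρ ^ (n - m)) := mul_le_mul_right (hDbound m n) _
  have hN : ∀ N : ℕ, ∑ n ∈ Finset.range N, μ (A n) ≤ EC * (1 - ρ)⁻¹ := by
    intro N
    have h1 : ∑ n ∈ Finset.range N, μ (A n) ≤ ∑ n ∈ Finset.range N, ∑ m ∈ Finset.range N,
        (if m ≤ n then μ (F m) * (EC * ρ ^ (n - m)) else 0) := by
      refine Finset.sum_le_sum fun n hn => ?_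
      refine (hkey n).trans (le_of_eq ?_)
      have e1 : ∑ m ∈ Finset.range (n + 1), μ (F m) * (EC * ρ ^ (n - m))
          = ∑ m ∈ Finset.range (n + 1),
            (if m ≤ n then μ (F m) * (EC * ρ ^ (n - m)) else 0) := by
        refine Finset.sum_congr rfl fun m hm => ?_
        rw [if_pos (Nat.lt_succ_iff.1 (Finset.mem_range.1 hm))]
      rw [e1]
      refine Finset.sum_subset (Finset.range_subset_range.2 (Finset.mem_range.1 hn)) ?_
      intro m _ hm
      rw [if_neg]
      intro hmn
      exact hm (Finset.mem_range.2 (Nat.lt_succ_of_le hmn))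
    rw [Finset.sum_comm] at h1
    have h2 : ∀ m, ∑ n ∈ Finset.range N,
        (if m ≤ n then μ (F m) * (EC * ρ ^ (n - m)) else 0)
        ≤ μ (F m) * (EC * (1 - ρ)⁻¹) := by
      intro m
      have e2 : ∑ n ∈ Finset.range N, (if m ≤ n then μ (F m) * (EC * ρ ^ (n - m)) else 0)
          = ∑ n ∈ Finset.Ico m N, μ (F m) * (EC * ρ ^ (n - m)) := by
        rw [← Finset.sum_filter]
        congr 1
        ext n
        simp [Finset.mem_filter, Finset.mem_Ico, and_comm]
      rw [e2, Finset.sum_Ico_eq_sum_range]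
      simp only [Nat.add_sub_cancel_left]
      calc ∑ j ∈ Finset.range (N - m), μ (F m) * (EC * ρ ^ j)
          = μ (F m) * (EC * ∑ j ∈ Finset.range (N - m), ρ ^ j) := by
            rw [← Finset.mul_sum, ← Finset.mul_sum]
        _ ≤ μ (F m) * (EC * (1 - ρ)⁻¹) := by
            gcongr
            rw [← ENNReal.tsum_geometric]
            exact ENNReal.sum_le_tsum _
    calc ∑ n ∈ Finset.range N, μ (A n)
        ≤ ∑ m ∈ Finset.range N, ∑ n ∈ Finset.range N,
            (if m ≤ n then μ (F m) * (EC * ρ ^ (n - m)) else 0) := h1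
      _ ≤ ∑ m ∈ Finset.range N, μ (F m) * (EC * (1 - ρ)⁻¹) :=
          Finset.sum_le_sum fun m _ => h2 m
      _ = (∑ m ∈ Finset.range N, μ (F m)) * (EC * (1 - ρ)⁻¹) := by
          rw [Finset.sum_mul]
      _ ≤ 1 * (EC * (1 - ρ)⁻¹) := by
          refine mul_le_mul_left ?_ _
          have hdisj : (↑(Finset.range N) : Set ℕ).PairwiseDisjoint F := by
            intro i _ j _ hij
            rcases lt_or_gt_of_ne hij with h | h
            · exact hFdisj h
            · exact (hFdisj h).symm
          rw [← measure_biUnion_finset hdisj (fun m _ => hFmeas m)]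
          exact prob_le_one
      _ = EC * (1 - ρ)⁻¹ := one_mul _
  rw [ENNReal.tsum_eq_iSup_sum]
  refine iSup_le fun s => ?_
  obtain ⟨N, hNs⟩ := s.exists_nat_subset_range
  exact (Finset.sum_le_sum_of_subset hNs).trans (hN N)

end Stmt12Aux

open Stmt12Aux Filter Topology

set_option maxHeartbeats 1000000 in
/-- Let `(Z_k)` be i.i.d. strictly positive random variables with
`P(Z₁ > x) ≤ C₀ e^{-γ₀ x}` for all `x ≥ 0`.  Since `Z_{ν_t + 1} = A_t + R_t`
(here, with `0`-based indexing, `Z_{ν_t+1} = Z (ν_t)` is the `(ν_t+1)`-st variable,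
namely `S_{ν_t+1} - S_{ν_t}`), there are constants `C < ∞` and `γ > 0` such that
`P(Z_{ν_t+1} > x) ≤ C e^{-γ x}` for all `t ≥ 0` and `x ≥ 0`, uniformly in `t`. -/
theorem stmt_12 {Ω : Type*} [MeasurableSpace Ω] (μ : Measure Ω) [IsProbabilityMeasure μ]
    (Z : ℕ → Ω → ℝ) (hmeas : ∀ k, Measurable (Z k))
    (hindep : iIndepFun Z μ)
    (hident : ∀ k, IdentDistrib (Z k) (Z 0) μ μ)
    (hpos : ∀ k ω, 0 < Z k ω)
    (C₀ γ₀ : ℝ) (hγ₀ : 0 < γ₀)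
    (htail : ∀ x : ℝ, 0 ≤ x → μ {ω | x < Z 0 ω} ≤ ENNReal.ofReal (C₀ * Real.exp (-γ₀ * x))) :
    (∀ t : ℝ, ∀ ω, Z (renewalCount Z t ω) ω = renewalAge Z t ω + renewalResidual Z t ω) ∧
      ∃ C γ : ℝ, 0 < γ ∧ ∀ t : ℝ, 0 ≤ t → ∀ x : ℝ, 0 ≤ x →
        μ {ω | x < Z (renewalCount Z t ω) ω} ≤ ENNReal.ofReal (C * Real.exp (-γ * x)) := by
  constructor
  · intro t ω
    simp only [renewalAge, renewalResidual, renewalSum, Finset.sum_range_succ]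
    ring
  -- the tail bound
  have hC₀ : 0 ≤ C₀ := by
    by_contra h
    push_neg at h
    have h1 := htail 0 le_rfl
    have h2 : μ {ω | (0:ℝ) < Z 0 ω} = 1 := by
      have : {ω | (0:ℝ) < Z 0 ω} = Set.univ := Set.eq_univ_of_forall fun ω => hpos 0 ω
      rw [this, measure_univ]
    rw [h2] at h1
    have h3 : ENNReal.ofReal (C₀ * Real.exp (-γ₀ * 0)) = 0 := by
      rw [ENNReal.ofReal_eq_zero]
      nlinarith [Real.exp_pos (-γ₀ * 0)]
    rw [h3] at h1
    exact absurd h1 (by simp)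
  -- choose δ with μ{Z₀ ≤ δ} < 1/2
  obtain ⟨n₀, hn₀⟩ : ∃ n : ℕ, μ {ω | Z 0 ω ≤ ((n : ℝ) + 1)⁻¹} < 1 / 2 := by
    have hmeasset : ∀ n : ℕ, MeasurableSet {ω | Z 0 ω ≤ ((n : ℝ) + 1)⁻¹} := fun n =>
      measurableSet_le (hmeas 0) measurable_const
    have hanti : Antitone fun n : ℕ => {ω | Z 0 ω ≤ ((n : ℝ) + 1)⁻¹} := by
      intro p q hpq ω hω
      have hω' : Z 0 ω ≤ ((q : ℝ) + 1)⁻¹ := hω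
      show Z 0 ω ≤ ((p : ℝ) + 1)⁻¹
      refine le_trans hω' ?_
      have h1 : (0:ℝ) < (p : ℝ) + 1 := by positivity
      have h2 : ((p : ℝ) + 1) ≤ (q : ℝ) + 1 := by
        have := (Nat.cast_le (α := ℝ)).2 hpq
        linarith
      exact inv_anti₀ h1 h2
    have hempty : (⋂ n : ℕ, {ω | Z 0 ω ≤ ((n : ℝ) + 1)⁻¹}) = ∅ := by
      ext ω
      simp only [Set.mem_iInter, Set.mem_setOf_eq, Set.mem_empty_iff_false, iff_false,
        not_forall, not_le]
      obtain ⟨n, hn⟩ := exists_nat_one_div_lt (hpos 0 ω)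
      exact ⟨n, by rw [one_div] at hn; exact hn⟩
    have htt := tendsto_measure_iInter_atTop (μ := μ)
      (fun n => (hmeasset n).nullMeasurableSet) hanti ⟨0, measure_ne_top μ _⟩
    rw [hempty, measure_empty] at htt
    exact (htt.eventually_lt_const (by norm_num : (0:ℝ≥0∞) < 1 / 2)).exists
  set δ : ℝ := ((n₀ : ℝ) + 1)⁻¹ with hδdef
  have hδ : 0 < δ := by positivity
  set lam : ℝ := 2 / δ with hlamdef
  have hlam : 0 < lam := by positivity
  set ρ : ℝ≥0∞ := ∫⁻ ω, ENNReal.ofReal (Real.exp (-(lam * Z 0 ω))) ∂μ with hρdef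
  have hρ1 : ρ < 1 := by
    have hset : MeasurableSet {ω | Z 0 ω ≤ δ} := measurableSet_le (hmeas 0) measurable_const
    have hpt : ∀ ω, ENNReal.ofReal (Real.exp (-(lam * Z 0 ω))) ≤
        Set.indicator {ω | Z 0 ω ≤ δ} (fun _ => (1:ℝ≥0∞)) ω
          + ENNReal.ofReal (Real.exp (-(lam * δ))) := by
      intro ω
      rcases le_or_gt (Z 0 ω) δ with h | h
      · rw [Set.indicator_of_mem (show ω ∈ {ω | Z 0 ω ≤ δ} from h)]
        refine le_add_right ?_
        refine ENNReal.ofReal_le_one.2 (Real.exp_le_one_iff.2 ?_)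
        nlinarith [hpos 0 ω]
      · rw [Set.indicator_of_notMem
            (show ω ∉ {ω | Z 0 ω ≤ δ} by simpa using h.not_ge), zero_add]
        refine ENNReal.ofReal_le_ofReal (Real.exp_le_exp.2 ?_)
        nlinarith
    have h1 : ρ ≤ μ {ω | Z 0 ω ≤ δ} + ENNReal.ofReal (Real.exp (-(lam * δ))) := by
      calc ρ ≤ ∫⁻ ω, (Set.indicator {ω | Z 0 ω ≤ δ} (fun _ => (1:ℝ≥0∞)) ω
            + ENNReal.ofReal (Real.exp (-(lam * δ)))) ∂μ := lintegral_mono hpt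
        _ = μ {ω | Z 0 ω ≤ δ} + ENNReal.ofReal (Real.exp (-(lam * δ))) := by
            rw [lintegral_add_right _ measurable_const, lintegral_const, measure_univ, mul_one]
            congr 1
            rw [lintegral_indicator hset]
            simp
    have h2 : ENNReal.ofReal (Real.exp (-(lam * δ))) < 1 / 2 := by
      have hld : lam * δ = 2 := by
        rw [hlamdef]; field_simp
      rw [hld]
      have h3 : Real.exp (-2) < 1 / 2 := by
        have h4 : (3:ℝ) ≤ Real.exp 2 := by nlinarith [Real.add_one_le_exp (2:ℝ)]
        have h5 : Real.exp (-2) = (Real.exp 2)⁻¹ := Real.exp_neg 2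
        rw [h5]
        rw [show (1:ℝ)/2 = 2⁻¹ by norm_num]
        apply inv_strictAnti₀ <;> linarith
      calc ENNReal.ofReal (Real.exp (-2)) < ENNReal.ofReal (1 / 2) :=
            (ENNReal.ofReal_lt_ofReal_iff (by norm_num)).2 h3
        _ = 1 / 2 := by
            rw [ENNReal.ofReal_div_of_pos (by norm_num), ENNReal.ofReal_one,
              ENNReal.ofReal_ofNat]
    calc ρ ≤ μ {ω | Z 0 ω ≤ δ} + ENNReal.ofReal (Real.exp (-(lam * δ))) := h1
      _ < 1 / 2 + 1 / 2 := ENNReal.add_lt_add hn₀ h2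
      _ = 1 := ENNReal.add_halves 1
  set γ : ℝ := γ₀ / 2 with hγdef
  have hγ : 0 < γ := by positivity
  set r : ℝ≥0∞ := ENNReal.ofReal (Real.exp (-γ)) with hrdef
  have hr1 : r < 1 := by
    rw [hrdef, ← ENNReal.ofReal_one]
    exact (ENNReal.ofReal_lt_ofReal_iff one_pos).2 (Real.exp_lt_one_iff.2 (by linarith))
  set W : ℝ≥0∞ := ENNReal.ofReal (Real.exp (lam * 1)) * (1 - ρ)⁻¹ with hW
  have hWtop : W ≠ ∞ := ENNReal.mul_ne_top ENNReal.ofReal_ne_top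
    (ENNReal.inv_ne_top.2 (tsub_pos_of_lt hρ1).ne')
  set K : ℝ≥0∞ := W * (ENNReal.ofReal C₀ * (1 - r)⁻¹) with hK
  have hKtop : K ≠ ∞ := ENNReal.mul_ne_top hWtop
    (ENNReal.mul_ne_top ENNReal.ofReal_ne_top (ENNReal.inv_ne_top.2 (tsub_pos_of_lt hr1).ne'))
  refine ⟨K.toReal, γ, hγ, ?_⟩
  intro t ht x hx
  set A : ℕ → ℕ → Set Ω := fun n k =>
    {ω | t - ((k : ℝ) + 1) < renewalSum Z n ω ∧ renewalSum Z n ω ≤ t - ((k : ℝ) + 1) + 1}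
    with hA
  set B : ℕ → ℕ → Set Ω := fun n k => {ω | max x (k : ℝ) < Z n ω} with hB
  set Nset : Set Ω := {ω | ∀ n, renewalSum Z n ω ≤ t} with hNset
  -- key inclusion
  have hincl : {ω | x < Z (renewalCount Z t ω) ω} ⊆
      Nset ∪ ⋃ (k : ℕ) (n : ℕ), A n k ∩ B n k := by
    intro ω hω
    by_cases hNmem : ω ∈ Nset
    · exact Or.inl hNmem
    right
    simp only [hNset, Set.mem_setOf_eq, not_forall, not_le] at hNmem
    obtain ⟨j, hj⟩ := hNmem
    have hmono : ∀ {p q : ℕ}, p ≤ q → renewalSum Z p ω ≤ renewalSum Z q ω := by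
      intro p q hpq
      show ∑ i ∈ Finset.range p, Z i ω ≤ ∑ i ∈ Finset.range q, Z i ω
      exact Finset.sum_le_sum_of_subset_of_nonneg (Finset.range_subset_range.2 hpq)
        (fun i _ _ => (hpos i ω).le)
    have hbdd : BddAbove {n : ℕ | renewalSum Z n ω ≤ t} := by
      refine ⟨j, fun n hn => ?_⟩
      by_contra hc
      push_neg at hc
      exact absurd (le_trans (hmono hc.le) hn) (not_le.2 hj)
    have h0mem : (0 : ℕ) ∈ {n : ℕ | renewalSum Z n ω ≤ t} := by
      simp only [Set.mem_setOf_eq, renewalSum, Finset.range_zero, Finset.sum_empty]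
      exact ht
    set ν : ℕ := renewalCount Z t ω with hν
    have hνmem : ν ∈ {n : ℕ | renewalSum Z n ω ≤ t} := by
      rw [hν, renewalCount]
      exact Nat.sSup_mem ⟨0, h0mem⟩ hbdd
    have hSν : renewalSum Z ν ω ≤ t := hνmem
    have hν1 : t < renewalSum Z (ν + 1) ω := by
      by_contra hc
      push_neg at hc
      have : ν + 1 ≤ ν := by
        conv_rhs => rw [hν, renewalCount]
        exact le_csSup hbdd hc
      omega
    have hZν : t - renewalSum Z ν ω < Z ν ω := by
      have hsucc : renewalSum Z (ν + 1) ω = renewalSum Z ν ω + Z ν ω := by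
        rw [renewalSum, renewalSum, Finset.sum_range_succ]
      linarith
    have hts : 0 ≤ t - renewalSum Z ν ω := by linarith
    set k : ℕ := ⌊t - renewalSum Z ν ω⌋₊ with hk
    have hfl : (k : ℝ) ≤ t - renewalSum Z ν ω := Nat.floor_le hts
    have hfu : t - renewalSum Z ν ω < (k : ℝ) + 1 := Nat.lt_floor_add_one _
    refine Set.mem_iUnion.2 ⟨k, Set.mem_iUnion.2 ⟨ν, ⟨⟨?_, ?_⟩, ?_⟩⟩⟩
    · linarith
    · linarith
    · exact max_lt hω (lt_of_le_of_lt hfl hZν)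
  -- the escape event has measure zero
  have hNzero : μ Nset = 0 := by
    have hub : ∀ j : ℕ, μ Nset ≤ ENNReal.ofReal (Real.exp (lam * t)) * ρ ^ j := by
      intro j
      have hsub : Nset ⊆ {ω | ∑ i ∈ Finset.range j, Z i ω ≤ t} := fun ω hω => hω j
      refine (measure_mono hsub).trans ?_
      have := chernoff hmeas hindep hident hlam (Finset.range j) t
      simpa using this
    have htend : Tendsto (fun j : ℕ => ENNReal.ofReal (Real.exp (lam * t)) * ρ ^ j)
        atTop (𝓝 0) := by
      have h1 := ENNReal.tendsto_pow_atTop_nhds_zero_of_lt_one hρ1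
      have h2 : Tendsto (fun j : ℕ => ENNReal.ofReal (Real.exp (lam * t)) * ρ ^ j) atTop
          (𝓝 (ENNReal.ofReal (Real.exp (lam * t)) * 0)) :=
        ENNReal.Tendsto.const_mul h1 (Or.inr ENNReal.ofReal_ne_top)
      simpa using h2
    exact le_antisymm (ge_of_tendsto' htend hub) zero_le
  -- bound each term
  have hGev : ∀ k n : ℕ, μ (A n k ∩ B n k) ≤ μ (A n k) *
      (ENNReal.ofReal C₀ * (ENNReal.ofReal (Real.exp (-γ * x)) * r ^ k)) := by
    intro k n
    have hAm : MeasurableSet[mZ Z (Set.Iio n)] (A n k) := by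
      simp only [hA]
      exact (measurable_S_mZ (fun i hi => hi)) measurableSet_Ioc
    have hBm : MeasurableSet[mZ Z {n}] (B n k) := by
      simp only [hB]
      exact (measurable_mZ (Set.mem_singleton n)) measurableSet_Ioi
    have heq : μ (A n k ∩ B n k) = μ (A n k) * μ (B n k) :=
      indep_events hmeas hindep (by simp : Disjoint (Set.Iio n) ({n} : Set ℕ)) hAm hBm
    have hid : μ (B n k) = μ {ω | max x (k : ℝ) < Z 0 ω} := by
      simp only [hB]
      exact (hident n).measure_mem_eq measurableSet_Ioi
    have htail2 : μ {ω | max x (k : ℝ) < Z 0 ω} ≤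
        ENNReal.ofReal (C₀ * Real.exp (-γ₀ * max x (k : ℝ))) :=
      htail _ (le_trans hx (le_max_left _ _))
    have hexp : C₀ * Real.exp (-γ₀ * max x (k : ℝ)) ≤
        C₀ * (Real.exp (-γ * x) * Real.exp (-γ) ^ k) := by
      have h2 : x ≤ max x (k : ℝ) := le_max_left _ _
      have h3 : (k : ℝ) ≤ max x (k : ℝ) := le_max_right _ _
      have h1 : Real.exp (-γ₀ * max x (k : ℝ)) ≤ Real.exp (-γ * x) * Real.exp (-γ * k) := by
        rw [← Real.exp_add]
        refine Real.exp_le_exp.2 ?_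
        rw [hγdef]
        nlinarith
      have h4 : Real.exp (-γ * (k : ℝ)) = Real.exp (-γ) ^ k := by
        rw [← Real.exp_nat_mul, mul_comm]
      refine mul_le_mul_of_nonneg_left ?_ hC₀
      rw [← h4]
      exact h1
    calc μ (A n k ∩ B n k) = μ (A n k) * μ (B n k) := heq
      _ ≤ μ (A n k) * ENNReal.ofReal (C₀ * (Real.exp (-γ * x) * Real.exp (-γ) ^ k)) := by
          refine mul_le_mul_right ?_ _
          rw [hid]
          exact htail2.trans (ENNReal.ofReal_le_ofReal hexp)
      _ = μ (A n k) *
          (ENNReal.ofReal C₀ * (ENNReal.ofReal (Real.exp (-γ * x)) * r ^ k)) := by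
          rw [ENNReal.ofReal_mul hC₀, ENNReal.ofReal_mul (Real.exp_pos _).le,
            ENNReal.ofReal_pow (Real.exp_pos _).le, hrdef]
  -- put everything together
  calc μ {ω | x < Z (renewalCount Z t ω) ω}
      ≤ μ (Nset ∪ ⋃ (k : ℕ) (n : ℕ), A n k ∩ B n k) := measure_mono hincl
    _ ≤ μ Nset + μ (⋃ (k : ℕ) (n : ℕ), A n k ∩ B n k) := measure_union_le _ _
    _ = μ (⋃ (k : ℕ) (n : ℕ), A n k ∩ B n k) := by rw [hNzero, zero_add]
    _ ≤ ∑' k : ℕ, μ (⋃ n : ℕ, A n k ∩ B n k) := measure_iUnion_le _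
    _ ≤ ∑' k : ℕ, ∑' n : ℕ, μ (A n k ∩ B n k) :=
        ENNReal.tsum_le_tsum fun k => measure_iUnion_le _
    _ ≤ ∑' k : ℕ, ∑' n : ℕ, μ (A n k) *
          (ENNReal.ofReal C₀ * (ENNReal.ofReal (Real.exp (-γ * x)) * r ^ k)) :=
        ENNReal.tsum_le_tsum fun k => ENNReal.tsum_le_tsum fun n => hGev k n
    _ = ∑' k : ℕ, (∑' n : ℕ, μ (A n k)) *
          (ENNReal.ofReal C₀ * (ENNReal.ofReal (Real.exp (-γ * x)) * r ^ k)) :=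
        tsum_congr fun k => ENNReal.tsum_mul_right
    _ ≤ ∑' k : ℕ, W * (ENNReal.ofReal C₀ * (ENNReal.ofReal (Real.exp (-γ * x)) * r ^ k)) := by
        refine ENNReal.tsum_le_tsum fun k => mul_le_mul_left ?_ _
        exact window hmeas hindep hident hlam (t - ((k : ℝ) + 1))
    _ = (W * ENNReal.ofReal C₀ * ENNReal.ofReal (Real.exp (-γ * x))) * ∑' k : ℕ, r ^ k := by
        rw [← ENNReal.tsum_mul_left]
        refine tsum_congr fun k => ?_
        ring
    _ = K * ENNReal.ofReal (Real.exp (-γ * x)) := by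
        rw [ENNReal.tsum_geometric, hK]
        ring
    _ = ENNReal.ofReal (K.toReal * Real.exp (-γ * x)) := by
        rw [ENNReal.ofReal_mul ENNReal.toReal_nonneg, ENNReal.ofReal_toReal hKtop]
end

section
/- The renewal measure U, defined by U(A) := ∑_{n=0}^∞ P(S_n ∈ A) for Borel A ⊆ [0,∞), satisfies U([0,1]) < ∞ and U([t, t+1]) ≤ U([0,1]) for every t ≥ 0. -/
open MeasureTheory ProbabilityTheory
open scoped ENNReal

section Aux
variable {Ω : Type*} [MeasurableSpace Ω] {μ : Measure Ω} [IsProbabilityMeasure μ]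

lemma map_add_of_indepFun {X Y : Ω → ℝ} (hX : Measurable X) (hY : Measurable Y)
    (h : IndepFun X Y μ) :
    μ.map (fun ω => X ω + Y ω) = Measure.conv (μ.map X) (μ.map Y) := by
  have hc : Measure.conv (μ.map X) (μ.map Y)
      = ((μ.map X).prod (μ.map Y)).map (fun p : ℝ × ℝ => p.1 + p.2) := rfl
  rw [hc, ← (indepFun_iff_map_prod_eq_prod_map_map hX.aemeasurable hY.aemeasurable).mp h,
    Measure.map_map measurable_add (hX.prodMk hY)]
  rfl

lemma map_sum_Ico (Z : ℕ → Ω → ℝ) (hmeas : ∀ k, Measurable (Z k))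
    (hindep : iIndepFun Z μ)
    (hident : ∀ k, IdentDistrib (Z k) (Z 0) μ μ) :
    ∀ k m, μ.map (fun ω => ∑ i ∈ Finset.Ico m (m+k), Z i ω)
      = μ.map (fun ω => ∑ i ∈ Finset.range k, Z i ω) := by
  intro k
  induction k with
  | zero => intro m; simp
  | succ k ih =>
    intro m
    have hsm : ∀ s : Finset ℕ, Measurable (fun ω => ∑ i ∈ s, Z i ω) :=
      fun s => Finset.measurable_sum _ fun i _ => hmeas i
    have hfun : ∀ s : Finset ℕ, (∑ j ∈ s, Z j) = (fun ω => ∑ i ∈ s, Z i ω) := by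
      intro s; funext ω; simp [Finset.sum_apply]
    have h1 : (fun ω => ∑ i ∈ Finset.Ico m (m+(k+1)), Z i ω)
        = fun ω => (∑ i ∈ Finset.Ico m (m+k), Z i ω) + Z (m+k) ω := by
      funext ω
      rw [← add_assoc, Finset.sum_Ico_succ_top (Nat.le_add_right m k)]
    have h2 : (fun ω => ∑ i ∈ Finset.range (k+1), Z i ω)
        = fun ω => (∑ i ∈ Finset.range k, Z i ω) + Z k ω := by
      funext ω; rw [Finset.sum_range_succ]
    have hi1 : IndepFun (fun ω => ∑ i ∈ Finset.Ico m (m+k), Z i ω) (Z (m+k)) μ := by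
      have := hindep.indepFun_finsetSum_of_notMem hmeas
        (s := Finset.Ico m (m+k)) (i := m+k) (by simp)
      rwa [hfun] at this
    have hi2 : IndepFun (fun ω => ∑ i ∈ Finset.range k, Z i ω) (Z k) μ := by
      have := hindep.indepFun_finsetSum_of_notMem hmeas
        (s := Finset.range k) (i := k) (by simp)
      rwa [hfun] at this
    rw [h1, h2, map_add_of_indepFun (hsm _) (hmeas _) hi1,
      map_add_of_indepFun (hsm _) (hmeas _) hi2, ih m,
      (hident (m+k)).map_eq, (hident k).map_eq]

lemma part2 (Z : ℕ → Ω → ℝ) (hmeas : ∀ k, Measurable (Z k))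
    (hindep : iIndepFun Z μ)
    (hident : ∀ k, IdentDistrib (Z k) (Z 0) μ μ)
    (hpos : ∀ k ω, 0 < Z k ω) (t : ℝ) :
    (∑' n : ℕ, μ {ω | renewalSum Z n ω ∈ Set.Icc t (t+1)})
      ≤ ∑' n : ℕ, μ {ω | renewalSum Z n ω ∈ Set.Icc 0 1} := by
  classical
  set S := renewalSum Z with hSdef
  have hSmeas : ∀ n, Measurable (S n) := fun n => Finset.measurable_sum _ fun i _ => hmeas i
  have hSmono : ∀ ω ⦃a b : ℕ⦄, a ≤ b → S a ω ≤ S b ω := by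
    intro ω a b hab
    exact Finset.sum_le_sum_of_subset_of_nonneg (Finset.range_subset_range.mpr hab)
      (fun i _ _ => (hpos i ω).le)
  set E : ℕ → Set Ω := fun m => {ω | t ≤ S m ω} ∩ ⋂ j ∈ Finset.range m, {ω | S j ω < t}
    with hEdef
  set M1 : ℕ → MeasurableSpace Ω :=
    fun m => ⨆ i ∈ {i | i < m}, MeasurableSpace.comap (Z i) inferInstance with hM1def
  set M2 : ℕ → MeasurableSpace Ω :=
    fun m => ⨆ i ∈ {i | m ≤ i}, MeasurableSpace.comap (Z i) inferInstance with hM2def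
  have hZ1 : ∀ m i, i < m → Measurable[M1 m] (Z i) := by
    intro m i hi
    exact Measurable.of_comap_le (le_iSup₂ (f := fun i (_ : i ∈ {i | i < m}) =>
      MeasurableSpace.comap (Z i) inferInstance) i hi)
  have hZ2 : ∀ m i, m ≤ i → Measurable[M2 m] (Z i) := by
    intro m i hi
    exact Measurable.of_comap_le (le_iSup₂ (f := fun i (_ : i ∈ {i | m ≤ i}) =>
      MeasurableSpace.comap (Z i) inferInstance) i hi)
  have hS1 : ∀ m j, j ≤ m → Measurable[M1 m] (S j) := by
    intro m j hj
    exact Finset.measurable_sum _ fun i hi =>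
      hZ1 m i (lt_of_lt_of_le (Finset.mem_range.mp hi) hj)
  have hEmeas1 : ∀ m, MeasurableSet[M1 m] (E m) := by
    intro m
    refine MeasurableSet.inter ?_ (Finset.measurableSet_biInter _ fun j hj => ?_)
    · exact measurableSet_le measurable_const (hS1 m m le_rfl)
    · exact measurableSet_lt (hS1 m j (Finset.mem_range.mp hj).le) measurable_const
  have hEmeas : ∀ m, MeasurableSet (E m) := by
    intro m
    refine MeasurableSet.inter ?_ (Finset.measurableSet_biInter _ fun j hj => ?_)
    · exact measurableSet_le measurable_const (hSmeas m)
    · exact measurableSet_lt (hSmeas j) measurable_const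
  have hW2 : ∀ m n, Measurable[M2 m] (fun ω => ∑ i ∈ Finset.Ico m n, Z i ω) := by
    intro m n
    exact Finset.measurable_sum _ fun i hi => hZ2 m i (Finset.mem_Ico.mp hi).1
  have hIndep : ∀ m, Indep (M1 m) (M2 m) μ := by
    intro m
    refine indep_iSup_of_disjoint (fun i => (hmeas i).comap_le) hindep.iIndep ?_
    rw [Set.disjoint_left]
    intro i hi1 hi2
    simp only [Set.mem_setOf_eq] at hi1 hi2
    omega
  -- the sets B m n
  set B : ℕ → ℕ → Set Ω := fun m n => {ω | (∑ i ∈ Finset.Ico m n, Z i ω) ∈ Set.Icc 0 1}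
    with hBdef
  have hBmeas2 : ∀ m n, MeasurableSet[M2 m] (B m n) :=
    fun m n => hW2 m n measurableSet_Icc
  have hmul : ∀ m n, μ (E m ∩ B m n) = μ (E m) * μ (B m n) := by
    intro m n
    exact (Indep_iff _ _ μ).mp (hIndep m) _ _ (hEmeas1 m) (hBmeas2 m n)
  have hBval : ∀ m n, m ≤ n → μ (B m n) = μ {ω | S (n - m) ω ∈ Set.Icc 0 1} := by
    intro m n hmn
    have hIco : Finset.Ico m n = Finset.Ico m (m + (n - m)) := by
      rw [Nat.add_sub_cancel' hmn]
    have hWmeas : Measurable (fun ω => ∑ i ∈ Finset.Ico m n, Z i ω) :=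
      Finset.measurable_sum _ fun i _ => hmeas i
    have h1 : μ (B m n) = (μ.map (fun ω => ∑ i ∈ Finset.Ico m n, Z i ω)) (Set.Icc 0 1) := by
      rw [Measure.map_apply hWmeas measurableSet_Icc]; rfl
    have h2 : μ {ω | S (n - m) ω ∈ Set.Icc 0 1}
        = (μ.map (fun ω => ∑ i ∈ Finset.range (n - m), Z i ω)) (Set.Icc 0 1) := by
      rw [Measure.map_apply (Finset.measurable_sum _ fun i _ => hmeas i) measurableSet_Icc]
      rfl
    rw [h1, hIco, map_sum_Ico Z hmeas hindep hident (n - m) m, h2]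
  -- pointwise inclusion
  have hsub : ∀ n, {ω | S n ω ∈ Set.Icc t (t+1)}
      ⊆ ⋃ m ∈ Finset.range (n+1), (E m ∩ B m n) := by
    intro n ω hω
    obtain ⟨h1, h2⟩ := hω
    have hex : ∃ m, t ≤ S m ω := ⟨n, h1⟩
    set m := Nat.find hex with hmdef
    have hm : t ≤ S m ω := Nat.find_spec hex
    have hmn : m ≤ n := Nat.find_min' hex h1
    refine Set.mem_biUnion (Finset.mem_range.mpr (Nat.lt_succ_of_le hmn)) ?_
    refine ⟨⟨hm, ?_⟩, ?_⟩
    · refine Set.mem_biInter fun j hj => ?_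
      exact lt_of_not_ge (Nat.find_min hex (Finset.mem_range.mp hj))
    · have hsum : (∑ i ∈ Finset.Ico m n, Z i ω) = S n ω - S m ω := by
        rw [hSdef]
        simp only [renewalSum]
        rw [Finset.sum_Ico_eq_sub _ hmn]
      constructor
      · rw [hsum]; linarith [hSmono ω hmn]
      · rw [hsum]; linarith
  -- per-n bound
  have hn : ∀ n, μ {ω | S n ω ∈ Set.Icc t (t+1)}
      ≤ ∑ m ∈ Finset.range (n+1), μ (E m) * μ {ω | S (n - m) ω ∈ Set.Icc 0 1} := by
    intro n
    calc μ {ω | S n ω ∈ Set.Icc t (t+1)}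
        ≤ μ (⋃ m ∈ Finset.range (n+1), (E m ∩ B m n)) := measure_mono (hsub n)
      _ ≤ ∑ m ∈ Finset.range (n+1), μ (E m ∩ B m n) := measure_biUnion_finset_le _ _
      _ = ∑ m ∈ Finset.range (n+1), μ (E m) * μ {ω | S (n - m) ω ∈ Set.Icc 0 1} := by
          refine Finset.sum_congr rfl fun m hm => ?_
          rw [hmul m n, hBval m n (Nat.lt_succ_iff.mp (Finset.mem_range.mp hm))]
  -- disjointness of E
  have hEdisj : Pairwise (Function.onFun Disjoint E) := by
    intro a b hab
    wlog h : a < b generalizing a b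
    · exact (this hab.symm (hab.lt_or_gt.resolve_left h)).symm
    rw [Function.onFun, Set.disjoint_left]
    rintro ω ⟨ha1, -⟩ ⟨-, hb2⟩
    have hmem : S a ω < t := Set.mem_iInter₂.mp hb2 a (Finset.mem_range.mpr h)
    exact absurd ha1 (not_le.mpr hmem)
  have hEsum : (∑' m, μ (E m)) ≤ 1 := by
    rw [← measure_iUnion hEdisj hEmeas]
    exact prob_le_one
  -- Cauchy product juggling
  set a : ℕ → ℝ≥0∞ := fun m => μ (E m) with hadef
  set b : ℕ → ℝ≥0∞ := fun k => μ {ω | S k ω ∈ Set.Icc 0 1} with hbdef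
  calc (∑' n : ℕ, μ {ω | S n ω ∈ Set.Icc t (t+1)})
      ≤ ∑' n : ℕ, ∑ m ∈ Finset.range (n+1), a m * b (n - m) := ENNReal.tsum_le_tsum hn
    _ = ∑' n : ℕ, ∑' m : ℕ, (if m ≤ n then a m * b (n - m) else 0) := by
        refine tsum_congr fun n => ?_
        rw [tsum_eq_sum (s := Finset.range (n+1))
          (fun m hm => by simp [Nat.lt_succ_iff.not.mp (Finset.mem_range.not.mp hm)])]
        exact (Finset.sum_congr rfl fun m hm => by
          simp [Nat.lt_succ_iff.mp (Finset.mem_range.mp hm)]).symm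
    _ = ∑' m : ℕ, ∑' n : ℕ, (if m ≤ n then a m * b (n - m) else 0) := ENNReal.tsum_comm
    _ = ∑' m : ℕ, a m * ∑' k : ℕ, b k := by
        refine tsum_congr fun m => ?_
        have hsupp : Function.support (fun n : ℕ => if m ≤ n then a m * b (n - m) else 0)
            ⊆ Set.range (fun k : ℕ => k + m) := by
          intro x hx
          rcases le_or_gt m x with h | h
          · exact ⟨x - m, Nat.sub_add_cancel h⟩
          · simp [Function.mem_support, not_le.mpr h] at hx
        rw [← (add_left_injective m).tsum_eq hsupp, ← ENNReal.tsum_mul_left]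
        refine tsum_congr fun k => ?_
        simp [Nat.le_add_left]
    _ = (∑' m : ℕ, a m) * ∑' k : ℕ, b k := ENNReal.tsum_mul_right
    _ ≤ 1 * ∑' k : ℕ, b k := mul_le_mul_left hEsum _
    _ = ∑' k : ℕ, b k := one_mul _

lemma part1 (Z : ℕ → Ω → ℝ) (hmeas : ∀ k, Measurable (Z k))
    (hindep : iIndepFun Z μ)
    (hident : ∀ k, IdentDistrib (Z k) (Z 0) μ μ)
    (hpos : ∀ k ω, 0 < Z k ω) :
    (∑' n : ℕ, μ {ω | renewalSum Z n ω ∈ Set.Icc 0 1}) < ⊤ := by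
  classical
  set φ : ℝ → ℝ≥0∞ := fun x => ENNReal.ofReal (Real.exp (-x)) with hφdef
  have hφ : Measurable φ := ENNReal.measurable_ofReal.comp (Real.measurable_exp.comp measurable_neg)
  set r : ℝ≥0∞ := ∫⁻ ω, φ (Z 0 ω) ∂μ with hrdef
  have hSmeas : ∀ n, Measurable (renewalSum Z n) :=
    fun n => Finset.measurable_sum _ fun i _ => hmeas i
  have hr1 : r < 1 := by
    have h1 : (∫⁻ _, (1:ℝ≥0∞) ∂μ) = 1 := by simp
    rw [hrdef, ← h1]
    refine lintegral_strict_mono (by simp [IsProbabilityMeasure.ne_zero μ]) aemeasurable_const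
      ?_ ?_
    · refine ne_top_of_le_ne_top (by simp [h1] : (∫⁻ _, (1:ℝ≥0∞) ∂μ) ≠ ⊤) (lintegral_mono fun ω => ?_)
      exact (ENNReal.ofReal_lt_one.mpr (Real.exp_lt_one_iff.mpr (neg_lt_zero.mpr (hpos 0 ω)))).le
    filter_upwards with ω
    exact ENNReal.ofReal_lt_one.mpr (Real.exp_lt_one_iff.mpr (neg_lt_zero.mpr (hpos 0 ω)))
  have hrZ : ∀ n, (∫⁻ ω, φ (Z n ω) ∂μ) = r := by
    intro n
    exact ((hident n).comp hφ).lintegral_eq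
  have hpow : ∀ n, (∫⁻ ω, φ (renewalSum Z n ω) ∂μ) = r ^ n := by
    intro n
    induction n with
    | zero => simp [renewalSum, φ]
    | succ n ih =>
      have hsplit : ∀ ω, φ (renewalSum Z (n+1) ω) = φ (renewalSum Z n ω) * φ (Z n ω) := by
        intro ω
        simp only [renewalSum, Finset.sum_range_succ, φ, neg_add, Real.exp_add,
          ← ENNReal.ofReal_mul (Real.exp_nonneg _)]
      have hind : IndepFun (renewalSum Z n) (Z n) μ := by
        have := hindep.indepFun_finsetSum_of_notMem hmeas
          (s := Finset.range n) (i := n) (by simp)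
        have hfun : (∑ j ∈ Finset.range n, Z j) = renewalSum Z n := by
          funext ω; simp [renewalSum, Finset.sum_apply]
        rwa [hfun] at this
      have hindφ : IndepFun (fun ω => φ (renewalSum Z n ω)) (fun ω => φ (Z n ω)) μ :=
        hind.comp hφ hφ
      calc (∫⁻ ω, φ (renewalSum Z (n+1) ω) ∂μ)
          = ∫⁻ ω, φ (renewalSum Z n ω) * φ (Z n ω) ∂μ := by simp_rw [hsplit]
        _ = (∫⁻ ω, φ (renewalSum Z n ω) ∂μ) * ∫⁻ ω, φ (Z n ω) ∂μ :=
            lintegral_mul_eq_lintegral_mul_lintegral_of_indepFun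
              (hφ.comp (hSmeas n)) (hφ.comp (hmeas n)) hindφ
        _ = r ^ n * r := by rw [ih, hrZ n]
        _ = r ^ (n+1) := by ring
  set c : ℝ≥0∞ := (ENNReal.ofReal (Real.exp (-1)))⁻¹ with hcdef
  have hc_ne_top : c ≠ ⊤ := by
    simp [hcdef, ENNReal.inv_ne_top, (Real.exp_pos _)]
  have hb : ∀ n, μ {ω | renewalSum Z n ω ∈ Set.Icc 0 1} ≤ c * r ^ n := by
    intro n
    have hsub : {ω | renewalSum Z n ω ∈ Set.Icc 0 1}
        ⊆ {ω | ENNReal.ofReal (Real.exp (-1)) ≤ φ (renewalSum Z n ω)} := by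
      intro ω hω
      exact ENNReal.ofReal_le_ofReal (Real.exp_le_exp.mpr (neg_le_neg hω.2))
    have hmarkov := mul_meas_ge_le_lintegral (μ := μ) (hφ.comp (hSmeas n))
      (ENNReal.ofReal (Real.exp (-1)))
    simp only [Function.comp] at hmarkov
    rw [hpow n] at hmarkov
    have h2 : μ {ω | renewalSum Z n ω ∈ Set.Icc 0 1}
        ≤ μ {ω | ENNReal.ofReal (Real.exp (-1)) ≤ φ (renewalSum Z n ω)} := measure_mono hsub
    calc μ {ω | renewalSum Z n ω ∈ Set.Icc 0 1}
        ≤ μ {ω | ENNReal.ofReal (Real.exp (-1)) ≤ φ (renewalSum Z n ω)} := h2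
      _ = c * (ENNReal.ofReal (Real.exp (-1))
            * μ {ω | ENNReal.ofReal (Real.exp (-1)) ≤ φ (renewalSum Z n ω)}) := by
          rw [← mul_assoc, hcdef, ENNReal.inv_mul_cancel (by simp [Real.exp_pos]) (by simp), one_mul]
      _ ≤ c * r ^ n := mul_le_mul_right hmarkov c
  calc (∑' n : ℕ, μ {ω | renewalSum Z n ω ∈ Set.Icc 0 1})
      ≤ ∑' n : ℕ, c * r ^ n := ENNReal.tsum_le_tsum hb
    _ = c * (1 - r)⁻¹ := by rw [ENNReal.tsum_mul_left, ENNReal.tsum_geometric]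
    _ < ⊤ := by
        refine ENNReal.mul_lt_top hc_ne_top.lt_top ?_
        simp only [ENNReal.inv_lt_top]
        exact tsub_pos_of_lt hr1

end Aux

/-- Let `(Z_k)` be i.i.d. strictly positive random variables.
The renewal measure `U(A) = ∑_{n=0}^∞ P(S_n ∈ A)` satisfies `U([0,1]) < ∞` and
`U([t, t+1]) ≤ U([0,1])` for every `t ≥ 0`. -/
theorem stmt_15 {Ω : Type*} [MeasurableSpace Ω] (μ : Measure Ω) [IsProbabilityMeasure μ]
    (Z : ℕ → Ω → ℝ) (hmeas : ∀ k, Measurable (Z k))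
    (hindep : iIndepFun Z μ)
    (hident : ∀ k, IdentDistrib (Z k) (Z 0) μ μ)
    (hpos : ∀ k ω, 0 < Z k ω)
    (U : Set ℝ → ℝ≥0∞) (hU : ∀ A : Set ℝ, U A = ∑' n : ℕ, μ {ω | renewalSum Z n ω ∈ A}) :
    U (Set.Icc 0 1) < ⊤ ∧ ∀ t : ℝ, 0 ≤ t → U (Set.Icc t (t + 1)) ≤ U (Set.Icc 0 1) := by
  constructor
  · rw [hU]
    exact part1 Z hmeas hindep hident hpos
  · intro t _
    rw [hU, hU]
    exact part2 Z hmeas hindep hident hpos t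
end

section
/- There exist constants ε > 0, γ > 0 and C < ∞ such that P( ∑_{k=1}^{ν_t+1} Y_k < ε t ) ≤ C e^{−γ t} for all t ≥ 0; that is, with overwhelming probability the Y-components contribute at least a positive fraction ε of the elapsed time t. -/
open MeasureTheory ProbabilityTheory
open scoped ENNReal

section Aux
open Real
variable {Ω : Type*} [MeasurableSpace Ω] {μ : Measure Ω} [IsProbabilityMeasure μ]

lemma iid_exp_int {W : ℕ → Ω → ℝ} (hid : ∀ k, IdentDistrib (W k) (W 0) μ μ)
    {s : ℝ} (hint : Integrable (fun ω => exp (s * W 0 ω)) μ) (k : ℕ) :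
    Integrable (fun ω => exp (s * W k ω)) μ :=
  (((hid k).comp ((measurable_id.const_mul s).exp)).integrable_iff).mpr hint

lemma iid_mgf_sum {W : ℕ → Ω → ℝ} (hmeas : ∀ k, Measurable (W k))
    (hindep : iIndepFun W μ)
    (hid : ∀ k, IdentDistrib (W k) (W 0) μ μ) (s : ℝ) (n : ℕ) :
    mgf (∑ i ∈ Finset.range n, W i) μ s = (mgf (W 0) μ s) ^ n := by
  rw [hindep.mgf_sum hmeas]
  have heq : ∀ i : ℕ, mgf (W i) μ s = mgf (W 0) μ s := fun i =>
    ((hid i).comp ((measurable_id.const_mul s).exp)).integral_eq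
  rw [Finset.prod_congr rfl fun i _ => heq i, Finset.prod_const, Finset.card_range]

lemma iid_chernoff_le {W : ℕ → Ω → ℝ} (hmeas : ∀ k, Measurable (W k))
    (hindep : iIndepFun W μ)
    (hid : ∀ k, IdentDistrib (W k) (W 0) μ μ)
    {s : ℝ} (hs : s ≤ 0) (hint : Integrable (fun ω => exp (s * W 0 ω)) μ) (n : ℕ) (a : ℝ) :
    μ {ω | ∑ k ∈ Finset.range n, W k ω ≤ a}
      ≤ ENNReal.ofReal (exp (-s * a) * (mgf (W 0) μ s) ^ n) := by
  have hintS : Integrable (fun ω => exp (s * (∑ i ∈ Finset.range n, W i) ω)) μ :=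
    hindep.integrable_exp_mul_sum hmeas (fun i _ => iid_exp_int hid hint i)
  have h := measure_le_le_exp_mul_mgf (μ := μ) (X := ∑ i ∈ Finset.range n, W i) a hs hintS
  rw [iid_mgf_sum hmeas hindep hid] at h
  have hset : {ω | ∑ k ∈ Finset.range n, W k ω ≤ a}
      = {ω | (∑ i ∈ Finset.range n, W i) ω ≤ a} := by
    ext ω; simp [Finset.sum_apply]
  rw [hset, ← ENNReal.ofReal_toReal (measure_ne_top μ _)]
  exact ENNReal.ofReal_le_ofReal h

lemma iid_chernoff_ge {W : ℕ → Ω → ℝ} (hmeas : ∀ k, Measurable (W k))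
    (hindep : iIndepFun W μ)
    (hid : ∀ k, IdentDistrib (W k) (W 0) μ μ)
    {s : ℝ} (hs : 0 ≤ s) (hint : Integrable (fun ω => exp (s * W 0 ω)) μ) (n : ℕ) (a : ℝ) :
    μ {ω | a ≤ ∑ k ∈ Finset.range n, W k ω}
      ≤ ENNReal.ofReal (exp (-s * a) * (mgf (W 0) μ s) ^ n) := by
  have hintS : Integrable (fun ω => exp (s * (∑ i ∈ Finset.range n, W i) ω)) μ :=
    hindep.integrable_exp_mul_sum hmeas (fun i _ => iid_exp_int hid hint i)
  have h := measure_ge_le_exp_mul_mgf (μ := μ) (X := ∑ i ∈ Finset.range n, W i) a hs hintS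
  rw [iid_mgf_sum hmeas hindep hid] at h
  have hset : {ω | a ≤ ∑ k ∈ Finset.range n, W k ω}
      = {ω | a ≤ (∑ i ∈ Finset.range n, W i) ω} := by
    ext ω; simp [Finset.sum_apply]
  rw [hset, ← ENNReal.ofReal_toReal (measure_ne_top μ _)]
  exact ENNReal.ofReal_le_ofReal h

lemma int_exp_neg {W : Ω → ℝ} (hmeas : Measurable W) (hpos : ∀ ω, 0 < W ω) :
    Integrable (fun ω => exp ((-1 : ℝ) * W ω)) μ := by
  refine Integrable.mono' (integrable_const 1)
    ((hmeas.const_mul _).exp.aestronglyMeasurable) (ae_of_all _ fun ω => ?_)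
  rw [Real.norm_eq_abs, abs_exp]
  exact Real.exp_le_one_iff.mpr (by nlinarith [hpos ω])

lemma mgf_neg_lt_one {W : Ω → ℝ} (hmeas : Measurable W) (hpos : ∀ ω, 0 < W ω) :
    mgf W μ (-1) < 1 := by
  have hint : Integrable (fun ω => exp ((-1 : ℝ) * W ω)) μ := int_exp_neg hmeas hpos
  have h1 : (0 : ℝ) < ∫ ω, (1 - exp ((-1 : ℝ) * W ω)) ∂μ := by
    rw [integral_pos_iff_support_of_nonneg_ae]
    · have : Function.support (fun ω => 1 - exp ((-1 : ℝ) * W ω)) = Set.univ := by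
        ext ω
        simp only [Function.mem_support, Set.mem_univ, iff_true]
        have := Real.exp_lt_one_iff.mpr (by nlinarith [hpos ω] : (-1 : ℝ) * W ω < 0)
        intro h; nlinarith
      rw [this]
      simp
    · refine ae_of_all _ fun ω => ?_
      have := Real.exp_lt_one_iff.mpr (by nlinarith [hpos ω] : (-1 : ℝ) * W ω < 0)
      simp only [Pi.zero_apply]
      nlinarith
    · exact (integrable_const 1).sub hint
  rw [integral_sub (integrable_const 1) hint, integral_const] at h1
  simp only [measure_univ, ENNReal.toReal_one, probReal_univ, smul_eq_mul, one_mul] at h1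
  unfold mgf
  linarith

end Aux

set_option maxHeartbeats 1000000 in
/-- Let `((X_k, Y_k))` be an i.i.d. sequence of pairs of strictly
positive random variables with `E[exp (γ₀ (X₁ + Y₁))] < ∞` for some `γ₀ > 0`, and let
`Z_k = X_k + Y_k`, with partial sums `S_n` and renewal count `ν_t`.  Then there exist
`ε > 0`, `γ > 0` and `C < ∞` such that
`P(∑_{k=1}^{ν_t+1} Y_k < ε t) ≤ C e^{-γ t}` for all `t ≥ 0`. -/
theorem stmt_17 {Ω : Type*} [MeasurableSpace Ω] (μ : Measure Ω) [IsProbabilityMeasure μ]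
    (X Y : ℕ → Ω → ℝ)
    (hmeasX : ∀ k, Measurable (X k)) (hmeasY : ∀ k, Measurable (Y k))
    (hindep : iIndepFun (fun k ω => (X k ω, Y k ω)) μ)
    (hident : ∀ k, IdentDistrib (fun ω => (X k ω, Y k ω)) (fun ω => (X 0 ω, Y 0 ω)) μ μ)
    (hposX : ∀ k ω, 0 < X k ω) (hposY : ∀ k ω, 0 < Y k ω)
    (γ₀ : ℝ) (hγ₀ : 0 < γ₀)
    (hmom : Integrable (fun ω => Real.exp (γ₀ * (X 0 ω + Y 0 ω))) μ) :
    ∃ ε γ C : ℝ, 0 < ε ∧ 0 < γ ∧ ∀ t : ℝ, 0 ≤ t →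
      μ {ω | (∑ k ∈ Finset.range (renewalCount (fun k ω => X k ω + Y k ω) t ω + 1), Y k ω)
            < ε * t}
        ≤ ENNReal.ofReal (C * Real.exp (-γ * t)) := by
  classical
  set Z : ℕ → Ω → ℝ := fun k ω => X k ω + Y k ω with hZdef
  have hmeasZ : ∀ k, Measurable (Z k) := fun k => (hmeasX k).add (hmeasY k)
  have hposZ : ∀ k ω, 0 < Z k ω := fun k ω => by
    have h1 := hposX k ω; have h2 := hposY k ω
    show 0 < X k ω + Y k ω; linarith
  have hYleZ : ∀ k ω, Y k ω ≤ Z k ω := fun k ω => by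
    have h1 := hposX k ω; show Y k ω ≤ X k ω + Y k ω; linarith
  have hindepY : iIndepFun Y μ :=
    hindep.comp (fun _ => (Prod.snd : ℝ × ℝ → ℝ)) (fun _ => measurable_snd)
  have hindepZ : iIndepFun Z μ :=
    hindep.comp (fun _ => (fun p : ℝ × ℝ => p.1 + p.2))
      (fun _ => measurable_fst.add measurable_snd)
  have hidY : ∀ k, IdentDistrib (Y k) (Y 0) μ μ := fun k => (hident k).comp measurable_snd
  have hidZ : ∀ k, IdentDistrib (Z k) (Z 0) μ μ := fun k =>
    (hident k).comp (measurable_fst.add measurable_snd)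
  set r : ℝ := mgf (Y 0) μ (-1) with hrdef
  have hintY0 : Integrable (fun ω => Real.exp ((-1 : ℝ) * Y 0 ω)) μ :=
    int_exp_neg (hmeasY 0) (hposY 0)
  have hr0 : 0 < r := mgf_pos hintY0
  have hr1 : r < 1 := mgf_neg_lt_one (hmeasY 0) (hposY 0)
  have hlr : Real.log r < 0 := Real.log_neg hr0 hr1
  set M : ℝ := mgf (Z 0) μ γ₀ with hMdef
  have hintZ0 : Integrable (fun ω => Real.exp (γ₀ * Z 0 ω)) μ := hmom
  have hM1 : 1 ≤ M := by
    have h := integral_mono (μ := μ) (integrable_const 1) hintZ0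
      (fun ω => Real.one_le_exp (by nlinarith [hposZ 0 ω]))
    rw [hMdef]; simpa [mgf] using h
  have hM0 : 0 < M := lt_of_lt_of_le one_pos hM1
  have hlM : 0 ≤ Real.log M := Real.log_nonneg hM1
  set δ : ℝ := γ₀ / (2 * (Real.log M + 1)) with hδdef
  have hδ : 0 < δ := div_pos hγ₀ (by nlinarith)
  have hδM : δ * Real.log M ≤ γ₀ / 2 := by
    rw [hδdef, div_mul_eq_mul_div, div_le_div_iff₀ (by nlinarith) (by norm_num : (0:ℝ) < 2)]
    nlinarith
  set ε : ℝ := δ * (-Real.log r) / 2 with hεdef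
  have hε : 0 < ε := div_pos (mul_pos hδ (by linarith)) two_pos
  set K : ℝ := 2 / (-Real.log r) with hKdef
  have hK : 0 < K := div_pos two_pos (by linarith)
  have hKlr : K * Real.log r = -2 := by
    rw [hKdef, div_mul_eq_mul_div, div_eq_iff (neg_ne_zero.mpr hlr.ne)]; ring
  set γ : ℝ := min (min ε (γ₀ / 2)) 1 with hγdef
  have hγpos : 0 < γ := lt_min (lt_min hε (by linarith)) one_pos
  have hγε : γ ≤ ε := le_trans (min_le_left _ _) (min_le_left _ _)
  have hγγ₀ : γ ≤ γ₀ / 2 := le_trans (min_le_left _ _) (min_le_right _ _)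
  have hγ1 : γ ≤ 1 := min_le_right _ _
  refine ⟨ε, γ, M + 2, hε, hγpos, ?_⟩
  intro t ht
  set n : ℕ := ⌈δ * t⌉₊ with hndef
  set m : ℕ := ⌈K * t⌉₊ with hmdef
  have hn_ge : δ * t ≤ (n : ℝ) := Nat.le_ceil _
  have hn_le : (n : ℝ) ≤ δ * t + 1 := (Nat.ceil_lt_add_one (by positivity)).le
  have hm_ge : K * t ≤ (m : ℝ) := Nat.le_ceil _
  set A := {ω : Ω | ∑ k ∈ Finset.range n, Y k ω ≤ ε * t} with hAdef
  set B := {ω : Ω | t ≤ ∑ k ∈ Finset.range n, Z k ω} with hBdef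
  set D := {ω : Ω | ∑ k ∈ Finset.range m, Y k ω ≤ t} with hDdef
  have hsub : {ω | (∑ k ∈ Finset.range (renewalCount Z t ω + 1), Y k ω) < ε * t}
      ⊆ A ∪ B ∪ D := by
    intro ω hω
    simp only [Set.mem_setOf_eq] at hω
    by_cases hbdd : BddAbove {j : ℕ | renewalSum Z j ω ≤ t}
    · have h0T : (0 : ℕ) ∈ {j : ℕ | renewalSum Z j ω ≤ t} := by
        simp [renewalSum, ht]
      have hνT : renewalCount Z t ω ∈ {j : ℕ | renewalSum Z j ω ≤ t} :=
        Nat.sSup_mem ⟨0, h0T⟩ hbdd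
      by_cases hn2 : n ≤ renewalCount Z t ω + 1
      · left; left
        show ω ∈ A
        rw [hAdef]
        simp only [Set.mem_setOf_eq]
        calc ∑ k ∈ Finset.range n, Y k ω
            ≤ ∑ k ∈ Finset.range (renewalCount Z t ω + 1), Y k ω :=
              Finset.sum_le_sum_of_subset_of_nonneg (Finset.range_subset_range.mpr hn2)
                (fun i _ _ => (hposY i ω).le)
          _ ≤ ε * t := hω.le
      · left; right
        show ω ∈ B
        rw [hBdef]
        simp only [Set.mem_setOf_eq]
        by_contra hcon
        push_neg at hcon
        have hnT : n ∈ {j : ℕ | renewalSum Z j ω ≤ t} := by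
          simpa [renewalSum] using hcon.le
        have hle : n ≤ renewalCount Z t ω := le_csSup hbdd hnT
        omega
    · right
      show ω ∈ D
      rw [hDdef]
      simp only [Set.mem_setOf_eq]
      obtain ⟨j, hj, hmj⟩ := not_bddAbove_iff.mp hbdd m
      have hmono : renewalSum Z m ω ≤ renewalSum Z j ω :=
        Finset.sum_le_sum_of_subset_of_nonneg (Finset.range_subset_range.mpr hmj.le)
          (fun i _ _ => (hposZ i ω).le)
      have hY : ∑ k ∈ Finset.range m, Y k ω ≤ renewalSum Z m ω :=
        Finset.sum_le_sum (fun i _ => hYleZ i ω)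
      exact le_trans hY (le_trans hmono hj)
  have hA : μ A ≤ ENNReal.ofReal (Real.exp (ε * t) * r ^ n) := by
    have h := iid_chernoff_le hmeasY hindepY hidY (by norm_num : (-1 : ℝ) ≤ 0) hintY0 n (ε * t)
    rw [hrdef]
    simpa using h
  have hD : μ D ≤ ENNReal.ofReal (Real.exp t * r ^ m) := by
    have h := iid_chernoff_le hmeasY hindepY hidY (by norm_num : (-1 : ℝ) ≤ 0) hintY0 m t
    rw [hrdef]
    simpa using h
  have hB : μ B ≤ ENNReal.ofReal (Real.exp (-γ₀ * t) * M ^ n) := by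
    have h := iid_chernoff_ge hmeasZ hindepZ hidZ hγ₀.le hintZ0 n t
    rw [hMdef]
    exact h
  -- real-number estimates
  have hrn : r ^ n = Real.exp ((n : ℝ) * Real.log r) := by
    rw [Real.exp_nat_mul, Real.exp_log hr0]
  have hrm : r ^ m = Real.exp ((m : ℝ) * Real.log r) := by
    rw [Real.exp_nat_mul, Real.exp_log hr0]
  have hMn : M ^ n = Real.exp ((n : ℝ) * Real.log M) := by
    rw [Real.exp_nat_mul, Real.exp_log hM0]
  have p1 : Real.exp (ε * t) * r ^ n ≤ Real.exp (-γ * t) := by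
    rw [hrn, ← Real.exp_add]
    apply Real.exp_le_exp.mpr
    have h1 : (n : ℝ) * Real.log r ≤ (δ * t) * Real.log r :=
      mul_le_mul_of_nonpos_right hn_ge hlr.le
    have h2 : δ * Real.log r = -(2 * ε) := by rw [hεdef]; ring
    nlinarith [mul_le_mul_of_nonneg_right hγε ht]
  have p2 : Real.exp (-γ₀ * t) * M ^ n ≤ M * Real.exp (-γ * t) := by
    rw [hMn, ← Real.exp_add]
    nth_rewrite 2 [show M = Real.exp (Real.log M) from (Real.exp_log hM0).symm]
    rw [← Real.exp_add]
    apply Real.exp_le_exp.mpr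
    have h1 : (n : ℝ) * Real.log M ≤ (δ * t + 1) * Real.log M :=
      mul_le_mul_of_nonneg_right hn_le hlM
    have h3 : δ * Real.log M * t ≤ (γ₀ / 2) * t := mul_le_mul_of_nonneg_right hδM ht
    nlinarith [mul_le_mul_of_nonneg_right hγγ₀ ht]
  have p3 : Real.exp t * r ^ m ≤ Real.exp (-γ * t) := by
    rw [hrm, ← Real.exp_add]
    apply Real.exp_le_exp.mpr
    have h1 : (m : ℝ) * Real.log r ≤ (K * t) * Real.log r :=
      mul_le_mul_of_nonpos_right hm_ge hlr.le
    have h2 : K * t * Real.log r = -2 * t := by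
      rw [mul_comm K t, mul_assoc, hKlr]; ring
    nlinarith [mul_le_mul_of_nonneg_right hγ1 ht]
  calc μ {ω | (∑ k ∈ Finset.range (renewalCount Z t ω + 1), Y k ω) < ε * t}
      ≤ μ (A ∪ B ∪ D) := measure_mono hsub
    _ ≤ μ (A ∪ B) + μ D := measure_union_le _ _
    _ ≤ (μ A + μ B) + μ D := add_le_add_left (measure_union_le _ _) _
    _ ≤ ENNReal.ofReal (Real.exp (ε * t) * r ^ n) + ENNReal.ofReal (Real.exp (-γ₀ * t) * M ^ n)
          + ENNReal.ofReal (Real.exp t * r ^ m) := add_le_add (add_le_add hA hB) hD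
    _ ≤ ENNReal.ofReal ((M + 2) * Real.exp (-γ * t)) := by
        rw [← ENNReal.ofReal_add (by positivity) (by positivity),
          ← ENNReal.ofReal_add (by positivity) (by positivity)]
        apply ENNReal.ofReal_le_ofReal
        nlinarith [p1, p2, p3]
end

section
/- Let b ≤ x be reals, let ζ_t := x − t + J_t, and let θ := inf{t ≥ 0 : ζ_t ≤ b} be the first passage time to level b. If there exists α > 0 such that m := E[exp(α (J₁ − 1))] < 1 (in particular E[exp(α J₁)] < ∞), then, with γ := −log m > 0, one has E[exp(γ θ)] ≤ exp(α (x − b)); in particular θ < ∞ almost surely and θ has a finite exponential moment. -/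
open MeasureTheory ProbabilityTheory
open scoped ENNReal

/-- The first passage time `θ = inf {t ≥ 0 : ζ_t ≤ b}` of the process
`ζ_t = x - t + J t` below the level `b`, as an extended nonnegative real
(`θ = ∞` when the level is never reached). -/
noncomputable def firstPassage {Ω : Type*} (J : ℝ → Ω → ℝ) (x b : ℝ) (ω : Ω) : ℝ≥0∞ :=
  sInf (ENNReal.ofReal '' {t : ℝ | 0 ≤ t ∧ x - t + J t ω ≤ b})

set_option linter.unusedSectionVars false

namespace Stmt18Aux

variable {Ω : Type*} [MeasurableSpace Ω]

/-- grid σ-algebra up to time `s`. -/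
def Gsig (J : ℝ → Ω → ℝ) (s : ℝ) : MeasurableSpace Ω :=
  ⨆ u ∈ Set.Icc (0:ℝ) s, MeasurableSpace.comap (J u) inferInstance

/-- grid event: the path stays above the level at all rational times ≤ k·δ. -/
def Agrid (J : ℝ → Ω → ℝ) (b x δ : ℝ) (k : ℕ) : Set Ω :=
  {ω | ∀ q : ℚ, 0 ≤ (q:ℝ) → (q:ℝ) ≤ (k:ℝ) * δ → b - x + (q:ℝ) < J (q:ℝ) ω}

/-- exponential of the grid value. -/
noncomputable def fgrid (J : ℝ → Ω → ℝ) (α δ : ℝ) (k : ℕ) (ω : Ω) : ℝ≥0∞ :=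
  ENNReal.ofReal (Real.exp (α * (J ((k:ℝ) * δ) ω - (k:ℝ) * δ)))

variable {J : ℝ → Ω → ℝ} {b x α δ : ℝ} {k : ℕ}

lemma measurable_exp_ofReal (α : ℝ) :
    Measurable fun y : ℝ => ENNReal.ofReal (Real.exp (α * y)) :=
  (Real.measurable_exp.comp (measurable_const_mul α)).ennreal_ofReal

lemma Gsig_le (hmeas : ∀ t, Measurable (J t)) (s : ℝ) :
    Gsig J s ≤ ‹MeasurableSpace Ω› :=
  iSup₂_le fun u _ => (hmeas u).comap_le

lemma measurable_fgrid (hmeas : ∀ t, Measurable (J t)) (k : ℕ) :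
    Measurable (fgrid J α δ k) :=
  (measurable_exp_ofReal α).comp ((hmeas _).sub measurable_const)

lemma measG {s u : ℝ} (hu : 0 ≤ u) (hus : u ≤ s) {φ : ℝ → ℝ≥0∞} (hφ : Measurable φ) :
    Measurable[Gsig J s] (fun ω => φ (J u ω)) := by
  have h1 : Measurable[Gsig J s] (J u) :=
    (comap_measurable (J u)).mono
      (le_iSup₂ (f := fun u _ => MeasurableSpace.comap (J u) inferInstance) u ⟨hu, hus⟩) le_rfl
  exact hφ.comp h1

lemma measurable_fgrid_G (hδ : 0 ≤ δ) (k : ℕ) :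
    Measurable[Gsig J ((k:ℝ) * δ)] (fgrid J α δ k) :=
  measG (by positivity) le_rfl
    ((measurable_exp_ofReal α).comp (measurable_id.sub measurable_const))

lemma Agrid_eq :
    Agrid J b x δ k = ⋂ (q : ℚ), ⋂ (_ : 0 ≤ (q:ℝ)), ⋂ (_ : (q:ℝ) ≤ (k:ℝ) * δ),
      (J (q:ℝ)) ⁻¹' (Set.Ioi (b - x + (q:ℝ))) := by
  ext ω; simp [Agrid, Set.mem_iInter]

lemma measurableSet_Agrid (hmeas : ∀ t, Measurable (J t)) (k : ℕ) :
    MeasurableSet (Agrid J b x δ k) := by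
  rw [Agrid_eq]
  exact MeasurableSet.iInter fun q => MeasurableSet.iInter fun _ => MeasurableSet.iInter fun _ =>
    (hmeas _) measurableSet_Ioi

lemma measurableSet_Agrid_G {s : ℝ} (hs : (k:ℝ) * δ ≤ s) :
    MeasurableSet[Gsig J s] (Agrid J b x δ k) := by
  rw [Agrid_eq]
  refine MeasurableSet.iInter fun q => MeasurableSet.iInter fun hq0 =>
    MeasurableSet.iInter fun hqk => ?_
  have h1 : Measurable[Gsig J s] (J (q:ℝ)) :=
    (comap_measurable (J (q:ℝ))).mono
      (le_iSup₂ (f := fun u _ => MeasurableSpace.comap (J u) inferInstance) (q:ℝ)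
        ⟨hq0, le_trans hqk hs⟩) le_rfl
  exact h1 measurableSet_Ioi

lemma Agrid_anti (hδ : 0 ≤ δ) {k l : ℕ} (hkl : k ≤ l) :
    Agrid J b x δ l ⊆ Agrid J b x δ k := by
  intro ω hω q hq0 hqk
  exact hω q hq0 (hqk.trans (by
    have : (k:ℝ) ≤ (l:ℝ) := Nat.cast_le.2 hkl
    nlinarith))


variable (μ : Measure Ω) [IsProbabilityMeasure μ]

lemma hstatL (hmeas : ∀ t, Measurable (J t))
    (hstat : ∀ s t : ℝ, 0 ≤ s → s ≤ t →
      IdentDistrib (fun ω => J t ω - J s ω) (J (t - s)) μ μ)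
    {s t : ℝ} (hs : 0 ≤ s) (hst : s ≤ t) :
    ∫⁻ ω, ENNReal.ofReal (Real.exp (α * (J t ω - J s ω))) ∂μ
      = ∫⁻ ω, ENNReal.ofReal (Real.exp (α * J (t - s) ω)) ∂μ := by
  have hφ := measurable_exp_ofReal α
  calc ∫⁻ ω, ENNReal.ofReal (Real.exp (α * (J t ω - J s ω))) ∂μ
      = ∫⁻ y, ENNReal.ofReal (Real.exp (α * y))
          ∂(Measure.map (fun ω => J t ω - J s ω) μ) :=
        (lintegral_map hφ ((hmeas t).sub (hmeas s))).symm
    _ = ∫⁻ y, ENNReal.ofReal (Real.exp (α * y)) ∂(Measure.map (J (t - s)) μ) := by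
        rw [(hstat s t hs hst).map_eq]
    _ = _ := lintegral_map hφ (hmeas _)

/-- The key independence splitting: an exponential of an increment times a
function of the past factorizes. -/
lemma split (hmeas : ∀ t, Measurable (J t))
    (hindep : ∀ s t : ℝ, 0 ≤ s → s ≤ t →
      Indep (MeasurableSpace.comap (fun ω => J t ω - J s ω) inferInstance)
        (⨆ u ∈ Set.Icc (0:ℝ) s, MeasurableSpace.comap (J u) inferInstance) μ)
    (hstat : ∀ s t : ℝ, 0 ≤ s → s ≤ t →
      IdentDistrib (fun ω => J t ω - J s ω) (J (t - s)) μ μ)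
    {s δ : ℝ} (hs : 0 ≤ s) (hδ : 0 ≤ δ) (g : Ω → ℝ≥0∞)
    (hg : Measurable[Gsig J s] g) :
    ∫⁻ ω, ENNReal.ofReal (Real.exp (α * (J (s + δ) ω - J s ω))) * g ω ∂μ
      = (∫⁻ ω, ENNReal.ofReal (Real.exp (α * J δ ω)) ∂μ) * ∫⁻ ω, g ω ∂μ := by
  have hst : s ≤ s + δ := by linarith
  have h1 : ∫⁻ ω, ENNReal.ofReal (Real.exp (α * (J (s + δ) ω - J s ω))) * g ω ∂μ
      = (∫⁻ ω, ENNReal.ofReal (Real.exp (α * (J (s + δ) ω - J s ω))) ∂μ) * ∫⁻ ω, g ω ∂μ := by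
    refine lintegral_mul_eq_lintegral_mul_lintegral_of_independent_measurableSpace
      (Measurable.comap_le ((hmeas _).sub (hmeas s))) (Gsig_le hmeas s)
      (hindep s (s + δ) hs hst) ?_ hg
    exact (measurable_exp_ofReal α).comp (comap_measurable _)
  rw [h1, hstatL μ hmeas hstat hs hst, add_sub_cancel_left]


lemma prodM (hmeas : ∀ t, Measurable (J t)) (h0 : ∀ ω, J 0 ω = 0)
    (hindep : ∀ s t : ℝ, 0 ≤ s → s ≤ t →
      Indep (MeasurableSpace.comap (fun ω => J t ω - J s ω) inferInstance)
        (⨆ u ∈ Set.Icc (0:ℝ) s, MeasurableSpace.comap (J u) inferInstance) μ)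
    (hstat : ∀ s t : ℝ, 0 ≤ s → s ≤ t →
      IdentDistrib (fun ω => J t ω - J s ω) (J (t - s)) μ μ)
    {δ : ℝ} (hδ : 0 ≤ δ) (n : ℕ) :
    ∫⁻ ω, ENNReal.ofReal (Real.exp (α * J ((n:ℝ) * δ) ω)) ∂μ
      = (∫⁻ ω, ENNReal.ofReal (Real.exp (α * J δ ω)) ∂μ) ^ n := by
  induction n with
  | zero =>
      simp only [Nat.cast_zero, zero_mul, pow_zero]
      simp [h0]
  | succ n ih =>
      have hs : (0:ℝ) ≤ (n:ℝ) * δ := by positivity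
      have harg : ((n+1:ℕ):ℝ) * δ = (n:ℝ) * δ + δ := by push_cast; ring
      have hpt : ∀ ω, ENNReal.ofReal (Real.exp (α * J (((n+1:ℕ):ℝ) * δ) ω))
          = ENNReal.ofReal (Real.exp (α * (J ((n:ℝ) * δ + δ) ω - J ((n:ℝ) * δ) ω)))
            * ENNReal.ofReal (Real.exp (α * J ((n:ℝ) * δ) ω)) := by
        intro ω
        rw [harg, ← ENNReal.ofReal_mul (Real.exp_pos _).le, ← Real.exp_add]
        ring_nf
      calc ∫⁻ ω, ENNReal.ofReal (Real.exp (α * J (((n+1:ℕ):ℝ) * δ) ω)) ∂μ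
          = ∫⁻ ω, ENNReal.ofReal (Real.exp (α * (J ((n:ℝ) * δ + δ) ω - J ((n:ℝ) * δ) ω)))
              * ENNReal.ofReal (Real.exp (α * J ((n:ℝ) * δ) ω)) ∂μ := by
            exact lintegral_congr hpt
        _ = (∫⁻ ω, ENNReal.ofReal (Real.exp (α * J δ ω)) ∂μ)
              * ∫⁻ ω, ENNReal.ofReal (Real.exp (α * J ((n:ℝ) * δ) ω)) ∂μ :=
            split μ hmeas hindep hstat hs hδ _
              (measG hs le_rfl (measurable_exp_ofReal α))
        _ = _ := by rw [ih, pow_succ, mul_comm]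


lemma c_val (hmeas : ∀ t, Measurable (J t)) (h0 : ∀ ω, J 0 ω = 0)
    (hindep : ∀ s t : ℝ, 0 ≤ s → s ≤ t →
      Indep (MeasurableSpace.comap (fun ω => J t ω - J s ω) inferInstance)
        (⨆ u ∈ Set.Icc (0:ℝ) s, MeasurableSpace.comap (J u) inferInstance) μ)
    (hstat : ∀ s t : ℝ, 0 ≤ s → s ≤ t →
      IdentDistrib (fun ω => J t ω - J s ω) (J (t - s)) μ μ)
    {m : ℝ} (hm0 : 0 < m)
    (hL : ENNReal.ofReal m = ∫⁻ ω, ENNReal.ofReal (Real.exp (α * (J 1 ω - 1))) ∂μ)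
    {M : ℕ} (hM : 0 < M) :
    ENNReal.ofReal (Real.exp (-(α * (M:ℝ)⁻¹)))
        * ∫⁻ ω, ENNReal.ofReal (Real.exp (α * J ((M:ℝ)⁻¹) ω)) ∂μ
      = ENNReal.ofReal (Real.exp (Real.log m * (M:ℝ)⁻¹)) := by
  set δ : ℝ := (M:ℝ)⁻¹ with hδdef
  have hδ : 0 ≤ δ := by positivity
  have hδM : (M:ℝ) * δ = 1 := mul_inv_cancel₀ (Nat.cast_ne_zero.2 hM.ne')
  set E := ∫⁻ ω, ENNReal.ofReal (Real.exp (α * J δ ω)) ∂μ with hEdef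
  set c := ENNReal.ofReal (Real.exp (-(α * δ))) * E with hcdef
  have hEM : ∫⁻ ω, ENNReal.ofReal (Real.exp (α * J 1 ω)) ∂μ = E ^ M := by
    have := prodM (α := α) μ hmeas h0 hindep hstat hδ M
    rwa [hδM] at this
  have hcM : c ^ M = ENNReal.ofReal m := by
    have hmul : ((M:ℝ)) * (-(α * δ)) = -α := by
      have : (M:ℝ) * (-(α * δ)) = -(α * ((M:ℝ) * δ)) := by ring
      rw [this, hδM, mul_one]
    have h2 : ENNReal.ofReal m = ENNReal.ofReal (Real.exp (-α)) * E ^ M := by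
      rw [hL, ← hEM]
      have hpt : ∀ ω, ENNReal.ofReal (Real.exp (α * (J 1 ω - 1)))
          = ENNReal.ofReal (Real.exp (-α)) * ENNReal.ofReal (Real.exp (α * J 1 ω)) := by
        intro ω
        rw [← ENNReal.ofReal_mul (Real.exp_pos _).le, ← Real.exp_add]
        ring_nf
      rw [lintegral_congr hpt]
      exact lintegral_const_mul _
        (((measurable_exp_ofReal α).comp (hmeas 1)) : Measurable fun ω => ENNReal.ofReal (Real.exp (α * J 1 ω)))
    calc c ^ M = ENNReal.ofReal (Real.exp (-(α * δ))) ^ M * E ^ M := mul_pow _ _ M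
      _ = ENNReal.ofReal ((Real.exp (-(α * δ))) ^ M) * E ^ M := by
          rw [← ENNReal.ofReal_pow (Real.exp_pos _).le]
      _ = ENNReal.ofReal (Real.exp (-α)) * E ^ M := by
          rw [← Real.exp_nat_mul, hmul]
      _ = ENNReal.ofReal m := h2.symm
  have hcne : c ≠ ⊤ := by
    intro hc
    rw [hc, ENNReal.top_pow hM.ne'] at hcM
    exact ENNReal.ofReal_ne_top hcM.symm
  have htR : c.toReal ^ M = m := by
    rw [← ENNReal.toReal_pow, hcM, ENNReal.toReal_ofReal hm0.le]
  have h3 : (Real.exp (Real.log m * δ)) ^ M = m := by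
    rw [← Real.exp_nat_mul]
    have : (M:ℝ) * (Real.log m * δ) = Real.log m := by
      have : (M:ℝ) * (Real.log m * δ) = Real.log m * ((M:ℝ) * δ) := by ring
      rw [this, hδM, mul_one]
    rw [this, Real.exp_log hm0]
  have h4 : c.toReal = Real.exp (Real.log m * δ) :=
    (pow_left_strictMonoOn₀ hM.ne').injOn (Set.mem_setOf.2 ENNReal.toReal_nonneg)
      (Set.mem_setOf.2 (Real.exp_pos _).le) (htR.trans h3.symm)
  rw [← ENNReal.ofReal_toReal hcne, h4]


lemma mainM (hmeas : ∀ t, Measurable (J t)) (h0 : ∀ ω, J 0 ω = 0)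
    (hmono : ∀ ω, MonotoneOn (fun s => J s ω) (Set.Ici (0:ℝ)))
    (hindep : ∀ s t : ℝ, 0 ≤ s → s ≤ t →
      Indep (MeasurableSpace.comap (fun ω => J t ω - J s ω) inferInstance)
        (⨆ u ∈ Set.Icc (0:ℝ) s, MeasurableSpace.comap (J u) inferInstance) μ)
    (hstat : ∀ s t : ℝ, 0 ≤ s → s ≤ t →
      IdentDistrib (fun ω => J t ω - J s ω) (J (t - s)) μ μ)
    (hbx : b ≤ x) (hα : 0 < α)
    {m : ℝ} (hm0 : 0 < m) (hm1 : m < 1)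
    (hL : ENNReal.ofReal m = ∫⁻ ω, ENNReal.ofReal (Real.exp (α * (J 1 ω - 1))) ∂μ)
    {M : ℕ} (hM : 0 < M) :
    (∫⁻ ω, (if firstPassage J x b ω = ⊤ then (⊤ : ℝ≥0∞)
          else ENNReal.ofReal (Real.exp ((-Real.log m) * (firstPassage J x b ω).toReal))) ∂μ)
        ≤ ENNReal.ofReal (Real.exp (α * (x - b) + α * (M:ℝ)⁻¹)) ∧
      (∀ᵐ ω ∂μ, firstPassage J x b ω < ⊤) := by
  set γ : ℝ := -Real.log m with hγdef
  have hγ : 0 < γ := neg_pos.2 (Real.log_neg hm0 hm1)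
  set δ : ℝ := (M:ℝ)⁻¹ with hδdef
  have hδ0 : 0 < δ := by positivity
  set A : ℕ → Set Ω := Agrid J b x δ with hAdef
  set f : ℕ → Ω → ℝ≥0∞ := fgrid J α δ with hfdef
  set E : ℝ≥0∞ := ∫⁻ ω, ENNReal.ofReal (Real.exp (α * J δ ω)) ∂μ with hEdef
  set c : ℝ≥0∞ := ENNReal.ofReal (Real.exp (-(α * δ))) * E with hcdef
  have hc : c = ENNReal.ofReal (Real.exp (Real.log m * δ)) :=
    c_val μ hmeas h0 hindep hstat hm0 hL hM
  have hAm : ∀ k, MeasurableSet (A k) := fun k => measurableSet_Agrid hmeas k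
  have hfm : ∀ k, Measurable (f k) := fun k => measurable_fgrid hmeas k
  set D : ℕ → Set Ω := fun k => Nat.casesOn k (A 0)ᶜ (fun j => A j \ A (j+1)) with hDdef
  have hDm : ∀ k, MeasurableSet (D k) := by
    intro k; cases k with
    | zero => exact (hAm 0).compl
    | succ j => exact (hAm j).diff (hAm (j+1))
  set u : ℕ → ℝ≥0∞ := fun k => ∫⁻ ω in A k, f k ω ∂μ with hudef
  set v : ℕ → ℝ≥0∞ := fun k => ∫⁻ ω in D k, f k ω ∂μ with hvdef
  have hf0 : ∀ ω, f 0 ω = 1 := by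
    intro ω
    simp only [hfdef, fgrid, Nat.cast_zero, zero_mul, h0, sub_zero, mul_zero,
      Real.exp_zero, ENNReal.ofReal_one]
  -- the supermartingale step
  have step : ∀ k : ℕ, ∫⁻ ω in A k, f (k+1) ω ∂μ = c * u k := by
    intro k
    have hs : (0:ℝ) ≤ (k:ℝ) * δ := by positivity
    have harg : ((k+1:ℕ):ℝ) * δ = (k:ℝ) * δ + δ := by push_cast; ring
    have hpt : ∀ ω, f (k+1) ω
        = ENNReal.ofReal (Real.exp (α * (J ((k:ℝ) * δ + δ) ω - J ((k:ℝ) * δ) ω)))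
          * (ENNReal.ofReal (Real.exp (-(α * δ))) * f k ω) := by
      intro ω
      simp only [hfdef, fgrid]
      rw [harg]
      rw [← ENNReal.ofReal_mul (Real.exp_pos _).le, ← ENNReal.ofReal_mul (Real.exp_pos _).le,
        ← Real.exp_add, ← Real.exp_add]
      congr 1
      ring
    set gg : Ω → ℝ≥0∞ := fun ω => ENNReal.ofReal (Real.exp (-(α * δ))) * f k ω with hggdef
    have hgG : Measurable[Gsig J ((k:ℝ) * δ)] ((A k).indicator gg) := by
      refine Measurable.indicator ?_ (measurableSet_Agrid_G le_rfl)
      exact measurable_const.mul (measurable_fgrid_G hδ0.le k)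
    calc ∫⁻ ω in A k, f (k+1) ω ∂μ
        = ∫⁻ ω in A k,
            ENNReal.ofReal (Real.exp (α * (J ((k:ℝ) * δ + δ) ω - J ((k:ℝ) * δ) ω))) * gg ω ∂μ :=
          lintegral_congr fun ω => hpt ω
      _ = ∫⁻ ω, (A k).indicator
            (fun ω => ENNReal.ofReal (Real.exp (α * (J ((k:ℝ) * δ + δ) ω - J ((k:ℝ) * δ) ω)))
              * gg ω) ω ∂μ := (lintegral_indicator (hAm k) _).symm
      _ = ∫⁻ ω, ENNReal.ofReal (Real.exp (α * (J ((k:ℝ) * δ + δ) ω - J ((k:ℝ) * δ) ω)))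
              * ((A k).indicator gg) ω ∂μ := by
          refine lintegral_congr fun ω => ?_
          by_cases hω : ω ∈ A k <;>
            simp [Set.indicator_of_mem, Set.indicator_of_notMem, hω]
      _ = E * ∫⁻ ω, (A k).indicator gg ω ∂μ :=
          split μ hmeas hindep hstat hs hδ0.le _ hgG
      _ = E * (ENNReal.ofReal (Real.exp (-(α * δ))) * u k) := by
          rw [lintegral_indicator (hAm k), hggdef]
          congr 1
          exact lintegral_const_mul _ (hfm k)
      _ = c * u k := by rw [hcdef]; ring
  have recur : ∀ k : ℕ, v (k+1) + u (k+1) = c * u k := by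
    intro k
    rw [← step k]
    have hsub : A (k+1) ⊆ A k := Agrid_anti hδ0.le (Nat.le_succ k)
    have hunion : A k = A (k+1) ∪ (A k \ A (k+1)) := (Set.union_diff_cancel hsub).symm
    rw [hunion, lintegral_union ((hAm k).diff (hAm (k+1))) Set.disjoint_sdiff_right]
    exact add_comm _ _
  have base : v 0 + u 0 = 1 := by
    have h1 : v 0 = μ (A 0)ᶜ := by
      show ∫⁻ ω in (A 0)ᶜ, f 0 ω ∂μ = μ (A 0)ᶜ
      rw [lintegral_congr hf0, setLIntegral_one]
    have h2 : u 0 = μ (A 0) := by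
      show ∫⁻ ω in A 0, f 0 ω ∂μ = μ (A 0)
      rw [lintegral_congr hf0, setLIntegral_one]
    rw [h1, h2, add_comm, measure_add_measure_compl (hAm 0)]
    exact measure_univ
  set w : ℕ → ℝ≥0∞ := fun k => ENNReal.ofReal (Real.exp (γ * ((k:ℝ) * δ))) with hwdef
  have hw0 : w 0 = 1 := by
    simp only [hwdef, Nat.cast_zero, zero_mul, mul_zero, Real.exp_zero, ENNReal.ofReal_one]
  have hwc : ∀ N : ℕ, w (N+1) * c = w N := by
    intro N
    rw [hwdef, hc, ← ENNReal.ofReal_mul (Real.exp_pos _).le, ← Real.exp_add]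
    congr 2
    have : Real.log m = -γ := by rw [hγdef]; ring
    rw [this]
    push_cast
    ring
  have invariant : ∀ N : ℕ,
      (∑ k ∈ Finset.range (N+1), w k * v k) + w N * u N = 1 := by
    intro N
    induction N with
    | zero =>
        rw [Finset.sum_range_one, hw0, one_mul, one_mul]
        exact base
    | succ N ih =>
        rw [Finset.sum_range_succ, add_assoc, ← mul_add, recur N, ← mul_assoc, hwc N]
        exact ih
  have partial_le : ∀ n : ℕ, (∑ k ∈ Finset.range n, w k * v k) ≤ 1 := by
    intro n
    cases n with
    | zero => simp
    | succ N => exact le_of_le_of_eq (le_add_right le_rfl) (invariant N)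
  have hsum : (∑' k, w k * v k) ≤ 1 := ENNReal.tsum_le_of_sum_range_le partial_le
  -- bounds for u and c powers
  have hub : ∀ k, u k ≤ c ^ k := by
    intro k
    induction k with
    | zero =>
        rw [pow_zero]
        calc u 0 ≤ v 0 + u 0 := le_add_self
          _ = 1 := base
    | succ k ih =>
        calc u (k+1) ≤ v (k+1) + u (k+1) := le_add_self
          _ = c * u k := recur k
          _ ≤ c * c ^ k := mul_le_mul_right ih c
          _ = c ^ (k+1) := (pow_succ' c k).symm
  -- lower bound for f on A k
  have hmemA : ∀ k (ω : Ω), ω ∈ A k → b - x + (k:ℝ) * δ < J ((k:ℝ) * δ) ω := by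
    intro k ω hω
    have hq : ((((k:ℚ) / (M:ℚ)):ℚ):ℝ) = (k:ℝ) * δ := by
      push_cast
      rw [hδdef, div_eq_mul_inv]
    have := hω ((k:ℚ) / (M:ℚ)) (by rw [hq]; positivity) (by rw [hq])
    rwa [hq] at this
  have hAbound : ∀ k, μ (A k) ≤ ENNReal.ofReal (Real.exp (α * (x - b))) * u k := by
    intro k
    have low : ∀ ω ∈ A k, ENNReal.ofReal (Real.exp (α * (b - x))) ≤ f k ω := by
      intro ω hω
      have h1 := hmemA k ω hω
      refine ENNReal.ofReal_le_ofReal (Real.exp_le_exp.2 ?_)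
      have : b - x ≤ J ((k:ℝ) * δ) ω - (k:ℝ) * δ := by linarith
      exact mul_le_mul_of_nonneg_left this hα.le
    have h2 : ENNReal.ofReal (Real.exp (α * (b - x))) * μ (A k) ≤ u k := by
      rw [← setLIntegral_const (A k)]
      exact setLIntegral_mono (hfm k) low
    calc μ (A k) = ENNReal.ofReal (Real.exp (α * (x - b)))
          * (ENNReal.ofReal (Real.exp (α * (b - x))) * μ (A k)) := by
          rw [← mul_assoc, ← ENNReal.ofReal_mul (Real.exp_pos _).le, ← Real.exp_add,
            show α * (x - b) + α * (b - x) = 0 by ring, Real.exp_zero,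
            ENNReal.ofReal_one, one_mul]
      _ ≤ ENNReal.ofReal (Real.exp (α * (x - b))) * u k := mul_le_mul_right h2 _
  have hc1 : c < 1 := by
    rw [hc]
    refine ENNReal.ofReal_lt_one.2 (Real.exp_lt_one_iff.2 ?_)
    exact mul_neg_of_neg_of_pos (Real.log_neg hm0 hm1) hδ0
  have hAinter : μ (⋂ k, A k) = 0 := by
    have hbound : ∀ k : ℕ, μ (⋂ j, A j) ≤ ENNReal.ofReal (Real.exp (α * (x - b))) * c ^ k := by
      intro k
      calc μ (⋂ j, A j) ≤ μ (A k) := measure_mono (Set.iInter_subset A k)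
        _ ≤ ENNReal.ofReal (Real.exp (α * (x - b))) * u k := hAbound k
        _ ≤ ENNReal.ofReal (Real.exp (α * (x - b))) * c ^ k := mul_le_mul_right (hub k) _
    have htend : Filter.Tendsto (fun k : ℕ => ENNReal.ofReal (Real.exp (α * (x - b))) * c ^ k)
        Filter.atTop (nhds (ENNReal.ofReal (Real.exp (α * (x - b))) * 0)) :=
      ENNReal.Tendsto.const_mul (ENNReal.tendsto_pow_atTop_nhds_zero_of_lt_one hc1)
        (Or.inr ENNReal.ofReal_ne_top)
    rw [mul_zero] at htend
    exact le_antisymm (ge_of_tendsto' htend hbound) zero_le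
  -- lower bound for f on D k and the first-passage bound
  have harg1 : ∀ k : ℕ, ((k+1:ℕ):ℝ) * δ = (k:ℝ) * δ + δ := by
    intro k; push_cast; ring
  have hDlowf : ∀ k, ∀ ω ∈ D k,
      ENNReal.ofReal (Real.exp (α * (b - x) - α * δ)) ≤ f k ω := by
    intro k ω hω
    cases k with
    | zero =>
        rw [hf0 ω]
        refine ENNReal.ofReal_le_one.2 (Real.exp_le_one_iff.2 ?_)
        nlinarith [hδ0, hα]
    | succ k =>
        have hωA : ω ∈ A k := hω.1
        have h1 := hmemA k ω hωA
        have h2 : J ((k:ℝ) * δ) ω ≤ J ((k:ℝ) * δ + δ) ω := by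
          refine hmono ω (Set.mem_Ici.2 (by positivity)) (Set.mem_Ici.2 (by positivity)) ?_
          linarith
        refine ENNReal.ofReal_le_ofReal (Real.exp_le_exp.2 ?_)
        have h3 : b - x - δ ≤ J (((k+1:ℕ):ℝ) * δ) ω - ((k+1:ℕ):ℝ) * δ := by
          rw [harg1 k]
          linarith
        calc α * (b - x) - α * δ = α * (b - x - δ) := by ring
          _ ≤ α * (J (((k+1:ℕ):ℝ) * δ) ω - ((k+1:ℕ):ℝ) * δ) :=
              mul_le_mul_of_nonneg_left h3 hα.le
  have hDbound : ∀ k, μ (D k)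
      ≤ ENNReal.ofReal (Real.exp (α * (x - b) + α * δ)) * v k := by
    intro k
    have h2 : ENNReal.ofReal (Real.exp (α * (b - x) - α * δ)) * μ (D k) ≤ v k := by
      rw [← setLIntegral_const (D k)]
      exact setLIntegral_mono (hfm k) (hDlowf k)
    calc μ (D k) = ENNReal.ofReal (Real.exp (α * (x - b) + α * δ))
          * (ENNReal.ofReal (Real.exp (α * (b - x) - α * δ)) * μ (D k)) := by
          rw [← mul_assoc, ← ENNReal.ofReal_mul (Real.exp_pos _).le, ← Real.exp_add,
            show α * (x - b) + α * δ + (α * (b - x) - α * δ) = 0 by ring, Real.exp_zero,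
            ENNReal.ofReal_one, one_mul]
      _ ≤ _ := mul_le_mul_right h2 _
  have hnotA : ∀ (k : ℕ) (ω : Ω), ω ∉ A k →
      firstPassage J x b ω ≤ ENNReal.ofReal ((k:ℝ) * δ) := by
    intro k ω hω
    simp only [hAdef, Agrid, Set.mem_setOf_eq] at hω
    push_neg at hω
    obtain ⟨q, hq0, hqk, hqle⟩ := hω
    have hmem : ENNReal.ofReal (q:ℝ) ∈
        ENNReal.ofReal '' {t : ℝ | 0 ≤ t ∧ x - t + J t ω ≤ b} :=
      ⟨(q:ℝ), ⟨hq0, by linarith⟩, rfl⟩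
    exact (sInf_le hmem).trans (ENNReal.ofReal_le_ofReal hqk)
  -- pointwise domination
  have hFG : ∀ ω, (if firstPassage J x b ω = ⊤ then (⊤ : ℝ≥0∞)
        else ENNReal.ofReal (Real.exp (γ * (firstPassage J x b ω).toReal)))
      ≤ (∑' k, (D k).indicator (fun _ => w k) ω)
        + (⋂ j, A j).indicator (fun _ => (⊤:ℝ≥0∞)) ω := by
    intro ω
    classical
    by_cases hmem : ω ∈ ⋂ j, A j
    · rw [Set.indicator_of_mem hmem]
      simp
    · have hex : ∃ k, ω ∉ A k := by
        simpa only [Set.mem_iInter, not_forall] using hmem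
      obtain ⟨k₀, hk₀, hmin⟩ : ∃ k₀, ω ∉ A k₀ ∧ ∀ j, j < k₀ → ω ∈ A j :=
        ⟨Nat.find hex, Nat.find_spec hex, fun j hj => not_not.1 (Nat.find_min hex hj)⟩
      have hDk : ω ∈ D k₀ := by
        cases k₀ with
        | zero => exact hk₀
        | succ j => exact ⟨hmin j (Nat.lt_succ_self j), hk₀⟩
      have hθ := hnotA k₀ ω hk₀
      have hne : firstPassage J x b ω ≠ ⊤ := (lt_of_le_of_lt hθ ENNReal.ofReal_lt_top).ne
      rw [if_neg hne]
      have htr : (firstPassage J x b ω).toReal ≤ (k₀:ℝ) * δ :=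
        ENNReal.toReal_le_of_le_ofReal (by positivity) hθ
      calc ENNReal.ofReal (Real.exp (γ * (firstPassage J x b ω).toReal))
          ≤ w k₀ := ENNReal.ofReal_le_ofReal
            (Real.exp_le_exp.2 (mul_le_mul_of_nonneg_left htr hγ.le))
        _ = (D k₀).indicator (fun _ => w k₀) ω := by rw [Set.indicator_of_mem hDk]
        _ ≤ ∑' k, (D k).indicator (fun _ => w k) ω := ENNReal.le_tsum k₀
        _ ≤ _ := le_self_add
  constructor
  · calc (∫⁻ ω, (if firstPassage J x b ω = ⊤ then (⊤ : ℝ≥0∞)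
          else ENNReal.ofReal (Real.exp (γ * (firstPassage J x b ω).toReal))) ∂μ)
        ≤ ∫⁻ ω, ((∑' k, (D k).indicator (fun _ => w k) ω)
            + (⋂ j, A j).indicator (fun _ => (⊤:ℝ≥0∞)) ω) ∂μ := lintegral_mono hFG
      _ = (∑' k, w k * μ (D k)) + ⊤ * μ (⋂ j, A j) := by
          rw [lintegral_add_left (Measurable.ennreal_tsum
            (fun k => measurable_const.indicator (hDm k)))]
          congr 1
          · rw [lintegral_tsum (fun k => (measurable_const.indicator (hDm k)).aemeasurable)]
            exact tsum_congr fun k => lintegral_indicator_const (hDm k) (w k)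
          · exact lintegral_indicator_const (MeasurableSet.iInter fun j => hAm j) ⊤
      _ = ∑' k, w k * μ (D k) := by rw [hAinter, mul_zero, add_zero]
      _ ≤ ∑' k, ENNReal.ofReal (Real.exp (α * (x - b) + α * δ)) * (w k * v k) := by
          refine ENNReal.tsum_le_tsum fun k => ?_
          calc w k * μ (D k) ≤ w k * (ENNReal.ofReal (Real.exp (α * (x - b) + α * δ)) * v k) :=
                mul_le_mul_right (hDbound k) _
            _ = ENNReal.ofReal (Real.exp (α * (x - b) + α * δ)) * (w k * v k) := by ring
      _ = ENNReal.ofReal (Real.exp (α * (x - b) + α * δ)) * ∑' k, w k * v k :=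
          ENNReal.tsum_mul_left
      _ ≤ ENNReal.ofReal (Real.exp (α * (x - b) + α * δ)) * 1 := mul_le_mul_right hsum _
      _ = ENNReal.ofReal (Real.exp (α * (x - b) + α * δ)) := mul_one _
  · refine ae_iff.2 (measure_mono_null ?_ hAinter)
    intro ω hω
    simp only [Set.mem_setOf_eq, not_lt, top_le_iff] at hω
    refine Set.mem_iInter.2 fun k => ?_
    by_contra hk
    have := (hnotA k ω hk).trans_lt ENNReal.ofReal_lt_top
    rw [hω] at this
    exact absurd this (lt_irrefl ⊤)

end Stmt18Aux

/-- Let `(J_t)_{t ≥ 0}` be a process with right-continuous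
nondecreasing paths, `J₀ = 0`, and stationary independent increments.  Let `b ≤ x`,
`ζ_t = x - t + J t`, and let `θ` be the first passage time of `ζ` to level `b`.
If there is `α > 0` with `m = E[exp (α (J₁ - 1))] < 1` (in particular
`E[exp (α J₁)] < ∞`), then, with `γ = -log m > 0`,
`E[exp (γ θ)] ≤ exp (α (x - b))`; in particular `θ < ∞` almost surely and `θ` has
a finite exponential moment. -/
theorem stmt_18 {Ω : Type*} [MeasurableSpace Ω] (μ : Measure Ω) [IsProbabilityMeasure μ]
    (J : ℝ → Ω → ℝ) (hmeas : ∀ t, Measurable (J t))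
    (h0 : ∀ ω, J 0 ω = 0)
    (hrc : ∀ ω, ∀ t : ℝ, 0 ≤ t → ContinuousWithinAt (fun s => J s ω) (Set.Ici t) t)
    (hmono : ∀ ω, MonotoneOn (fun s => J s ω) (Set.Ici (0:ℝ)))
    (hindep : ∀ s t : ℝ, 0 ≤ s → s ≤ t →
      Indep (MeasurableSpace.comap (fun ω => J t ω - J s ω) inferInstance)
        (⨆ u ∈ Set.Icc (0:ℝ) s, MeasurableSpace.comap (J u) inferInstance) μ)
    (hstat : ∀ s t : ℝ, 0 ≤ s → s ≤ t →
      IdentDistrib (fun ω => J t ω - J s ω) (J (t - s)) μ μ)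
    (b x : ℝ) (hbx : b ≤ x)
    (α : ℝ) (hα : 0 < α)
    (hint : Integrable (fun ω => Real.exp (α * (J 1 ω - 1))) μ)
    (m : ℝ) (hm : m = ∫ ω, Real.exp (α * (J 1 ω - 1)) ∂μ) (hm1 : m < 1) :
    (∫⁻ ω, (if firstPassage J x b ω = ⊤ then (⊤ : ℝ≥0∞)
          else ENNReal.ofReal (Real.exp ((-Real.log m) * (firstPassage J x b ω).toReal))) ∂μ)
        ≤ ENNReal.ofReal (Real.exp (α * (x - b))) ∧
      (0 < -Real.log m) ∧
      (∀ᵐ ω ∂μ, firstPassage J x b ω < ⊤) := by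
  have hm0 : 0 < m := by
    rw [hm]
    rw [MeasureTheory.integral_pos_iff_support_of_nonneg
      (fun ω => (Real.exp_pos _).le) hint]
    have hsupp : Function.support (fun ω => Real.exp (α * (J 1 ω - 1))) = Set.univ :=
      Set.eq_univ_of_forall fun ω => (Real.exp_pos _).ne'
    rw [hsupp]
    simp
  have hL : ENNReal.ofReal m = ∫⁻ ω, ENNReal.ofReal (Real.exp (α * (J 1 ω - 1))) ∂μ := by
    rw [hm]
    exact MeasureTheory.ofReal_integral_eq_lintegral_ofReal hint
      (Filter.Eventually.of_forall fun ω => (Real.exp_pos _).le)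
  have hmain := fun (M : ℕ) (hM : 0 < M) =>
    Stmt18Aux.mainM μ hmeas h0 hmono hindep hstat hbx hα hm0 hm1 hL hM
  refine ⟨?_, neg_pos.2 (Real.log_neg hm0 hm1), (hmain 1 one_pos).2⟩
  -- let M → ∞
  have htend : Filter.Tendsto
      (fun M : ℕ => ENNReal.ofReal (Real.exp (α * (x - b) + α * (M:ℝ)⁻¹)))
      Filter.atTop (nhds (ENNReal.ofReal (Real.exp (α * (x - b))))) := by
    have h1 : Filter.Tendsto (fun M : ℕ => α * (M:ℝ)⁻¹) Filter.atTop (nhds 0) := by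
      simpa using tendsto_const_nhds.mul (tendsto_inv_atTop_nhds_zero_nat (𝕜 := ℝ))
    have h2 : Filter.Tendsto (fun M : ℕ => α * (x - b) + α * (M:ℝ)⁻¹) Filter.atTop
        (nhds (α * (x - b))) := by
      simpa using tendsto_const_nhds.add h1
    have h3 := (Real.continuous_exp.tendsto _).comp h2
    exact (ENNReal.continuous_ofReal.tendsto _).comp h3
  refine ge_of_tendsto htend ?_
  filter_upwards [Filter.eventually_gt_atTop 0] with M hM
  exact (hmain M hM).1
end
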